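/- Decision-function formulation of Theorem 3: let n ≥ 1, 1 ≤ k ≤ n, and m ≥ 1. There exists no function δ assigning to each vertex (a, w) of the m-iterated standard chromatic subdivision of the input complex I (where w = view_a(X·γ₁·…·γ_m) is the iterated view of process a) a decision value δ(a,w) ∈ Π such that for every X ∈ F(I) and all ordered set partitions γ₁,…,γ_m of Π, writing σ = X·γ₁·…·γ_m: (validity) every decided value δ(a, view_a(σ)) belongs to {v | (b,v) ∈ X for some b}, and (agreement) |{δ(a, view_a(σ)) | a ∈ Π}| ≤ k. -/

import Mathlib

/-! ## Epistemic μ-calculus: syntax and Kripke semantics -/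

/-- Positive formulas of the epistemic μ-calculus: atoms, negated atoms,
propositional variables (indexed by `ℕ`), disjunction, conjunction,
distributed knowledge `D_A`, and greatest fixpoints `νZ.φ`. -/
inductive Formula (AP Agent : Type) : Type
  | atom  : AP → Formula AP Agent
  | natom : AP → Formula AP Agent
  | var   : ℕ → Formula AP Agent
  | or    : Formula AP Agent → Formula AP Agent → Formula AP Agent
  | and   : Formula AP Agent → Formula AP Agent → Formula AP Agent
  | know  : Set Agent → Formula AP Agent → Formula AP Agent
  | nu    : ℕ → Formula AP Agent → Formula AP Agent

/-- A Kripke model: indistinguishability relations and a labeling. -/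
structure KModel (Agent AP S : Type) where
  rel : Agent → S → S → Prop
  label : S → Set AP

/-- Derived relation `≈_A`. -/
def KModel.relD {Agent AP S : Type} (M : KModel Agent AP S) (A : Set Agent) (X Y : S) : Prop :=
  ∀ a ∈ A, M.rel a X Y

/-- The semantics `⟦φ⟧^M_ρ`. -/
def sem {Agent AP S : Type} (M : KModel Agent AP S) (ρ : ℕ → Set S) :
    Formula AP Agent → Set S
  | .atom p   => {X | p ∈ M.label X}
  | .natom p  => {X | p ∉ M.label X}
  | .var Z    => ρ Z
  | .or φ ψ   => sem M ρ φ ∪ sem M ρ ψ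
  | .and φ ψ  => sem M ρ φ ∩ sem M ρ ψ
  | .know A φ => {X | ∀ Y, M.relD A Y X → Y ∈ sem M ρ φ}
  | .nu Z φ   => ⋃₀ {T | T ⊆ sem M (Function.update ρ Z T) φ}

/-- Free propositional variables of a formula. -/
def Formula.freeVars {AP Agent : Type} : Formula AP Agent → Set ℕ
  | .atom _   => ∅
  | .natom _  => ∅
  | .var Z    => {Z}
  | .or φ ψ   => φ.freeVars ∪ ψ.freeVars
  | .and φ ψ  => φ.freeVars ∪ ψ.freeVars
  | .know _ φ => φ.freeVars
  | .nu Z φ   => φ.freeVars \ {Z}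

/-- All propositional variables occurring in a formula (free or bound). -/
def Formula.vars {AP Agent : Type} : Formula AP Agent → Set ℕ
  | .atom _   => ∅
  | .natom _  => ∅
  | .var Z    => {Z}
  | .or φ ψ   => φ.vars ∪ ψ.vars
  | .and φ ψ  => φ.vars ∪ ψ.vars
  | .know _ φ => φ.vars
  | .nu Z φ   => insert Z φ.vars

/-- Satisfaction of a closed formula (under every interpretation). -/
def Models {Agent AP S : Type} (M : KModel Agent AP S) (X : S) (φ : Formula AP Agent) : Prop :=
  ∀ ρ, X ∈ sem M ρ φ

/-- Validity of a closed formula in a model. -/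
def ValidIn {Agent AP S : Type} (M : KModel Agent AP S) (φ : Formula AP Agent) : Prop :=
  ∀ X, Models M X φ

/-! ## Simplicial models presented by facet data -/

/-- A (pure chromatic) simplicial model presented by its facets: each state
(facet) `σ` has, for every color `a ∈ Π`, a unique vertex `(a, vert σ a)` with
value in `V`; `label` gives the atomic propositions true at each facet. -/
structure SModel (n : ℕ) (V AP S : Type) where
  vert : S → Fin (n + 1) → V
  label : S → Set AP

/-- The induced Kripke model: `σ ∼_a τ` iff `σ` and `τ` share their vertex of
color `a` (i.e. `a ∈ χ(σ ∩ τ)`). -/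
def SModel.toKModel {n : ℕ} {V AP S : Type} (M : SModel n V AP S) :
    KModel (Fin (n + 1)) AP S where
  rel a σ τ := M.vert σ a = M.vert τ a
  label := M.label

/-- Satisfaction of a closed formula at a state of a simplicial model. -/
def ModelsS {n : ℕ} {V AP S : Type} (M : SModel n V AP S) (σ : S)
    (φ : Formula AP (Fin (n + 1))) : Prop :=
  ∀ ρ, σ ∈ sem M.toKModel ρ φ

/-- Validity of a closed formula in a simplicial model. -/
def ValidInS {n : ℕ} {V AP S : Type} (M : SModel n V AP S)
    (φ : Formula AP (Fin (n + 1))) : Prop :=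
  ∀ σ, ModelsS M σ φ

/-- A morphism of simplicial models: a color-preserving vertex map `vmap`
sending every simplex of the source to a simplex of the target (hence every
facet `σ` to the facet `smap σ`), preserving the labeling. -/
structure SMorphism {n : ℕ} {V V' AP S S' : Type}
    (M : SModel n V AP S) (M' : SModel n V' AP S') where
  vmap : Fin (n + 1) × V → Fin (n + 1) × V'
  color : ∀ p, (vmap p).1 = p.1
  smap : S → S'
  vert_comm : ∀ σ a, vmap (a, M.vert σ a) = (a, M'.vert (smap σ) a)
  label_eq : ∀ σ, M.label σ = M'.label (smap σ)

/-! ## Ordered set partitions, iterated immediate snapshot views, and the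
product update models `I[IS^m]` and `I[SA_k]` -/

/-- An ordered set partition `⟨A₁|A₂|…|A_r⟩` of `Π = Fin (n+1)`. -/
structure OSP (n : ℕ) where
  parts : List (Finset (Fin (n + 1)))
  nonempty : ∀ A ∈ parts, A.Nonempty
  pairwise_disjoint : parts.Pairwise Disjoint
  cover : ∀ a : Fin (n + 1), ∃ A ∈ parts, a ∈ A

/-- `view*_a(γ) = A₁ ∪ … ∪ A_q` where `a ∈ A_q`: the set of processes seen by
`a` in the snapshot round `γ`. -/
def OSP.viewSet {n : ℕ} (γ : OSP n) (a : Fin (n + 1)) : Finset (Fin (n + 1)) :=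
  (γ.parts.take (γ.parts.findIdx (fun A => decide (a ∈ A)) + 1)).foldr (· ∪ ·) ∅

/-- Iterated snapshot views: `base v` is an initial input value, and `snap f`
is the view of a process after a snapshot round, recording (for exactly the
processes it has seen) their views at the previous round. -/
inductive View (n : ℕ) : Type
  | base : Fin (n + 1) → View n
  | snap : (Fin (n + 1) → Option (View n)) → View n

/-- `iisView X m γ a` is `view_a(X·γ₁·…·γ_m)`, the view of process `a` in the
facet `X·γ₁·…·γ_m` of the `m`-iterated standard chromatic subdivision of the
input facet `X` (where `γ i` is the `(i+1)`-st round's ordered set partition). -/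
def iisView {n : ℕ} (X : Fin (n + 1) → Fin (n + 1)) :
    (m : ℕ) → (Fin m → OSP n) → Fin (n + 1) → View n
  | 0, _, a => .base (X a)
  | m + 1, γ, a => .snap (fun b =>
      if b ∈ (γ (Fin.last m)).viewSet a then
        some (iisView X m (fun i => γ i.castSucc) b)
      else none)

/-- Facets of `I[IS^m]`: an input facet `X ∈ F(I)` (given by the input values
of the `n+1` processes) together with the `m` rounds' ordered set partitions. -/
def IISState (n m : ℕ) : Type := (Fin (n + 1) → Fin (n + 1)) × (Fin m → OSP n)

/-- Atomic propositions with factual change: `Sum.inl (a,v)` is `input_{a,v}`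
and `Sum.inr (a,d)` is `decide_{a,d}`. -/
abbrev APfc (n : ℕ) := (Fin (n + 1) × Fin (n + 1)) ⊕ (Fin (n + 1) × Fin (n + 1))

/-- The product update model `I[IS^m]` of the `m`-round iterated immediate
snapshot protocol (labels mention only inputs). -/
def IISmodel (n m : ℕ) : SModel n (View n) (APfc n) (IISState n m) where
  vert σ a := iisView σ.1 m σ.2 a
  label σ := {p | ∃ a, p = Sum.inl (a, σ.1 a)}

/-- Facets of `I[SA_k]`: a pair of an input assignment and an output
assignment of the `n+1` processes, such that at most `k` values are decided
and every decided value is some process's input. -/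
def SAState (n k : ℕ) : Type :=
  {p : (Fin (n + 1) → Fin (n + 1)) × (Fin (n + 1) → Fin (n + 1)) //
    (Finset.univ.image p.2).card ≤ k ∧ Finset.univ.image p.2 ⊆ Finset.univ.image p.1}

/-- The product update model `I[SA_k]` of the `k`-set agreement task
(labels mention only inputs). -/
def SAmodel (n k : ℕ) : SModel n (Fin (n + 1) × Fin (n + 1)) (APfc n) (SAState n k) where
  vert σ a := (σ.val.1 a, σ.val.2 a)
  label σ := {p | ∃ a, p = Sum.inl (a, σ.val.1 a)}

/-- The factual-change extension `I[SA_k]^fc`: same Kripke frame, labels also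
mention the decided values. -/
def SAfc (n k : ℕ) : SModel n (Fin (n + 1) × Fin (n + 1)) (APfc n) (SAState n k) where
  vert σ a := (σ.val.1 a, σ.val.2 a)
  label σ := {p | (∃ a, p = Sum.inl (a, σ.val.1 a)) ∨ ∃ a, p = Sum.inr (a, σ.val.2 a)}

/-- The factual-change model `I[IS^m]^{fc,δ}` for a morphism
`δ : I[IS^m] → I[SA_k]`: the Kripke frame of `I[IS^m]` with labels pulled
back from `I[SA_k]^fc` along `δ`. -/
def IISfc (n m k : ℕ) (δ : SMorphism (IISmodel n m) (SAmodel n k)) :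
    SModel n (View n) (APfc n) (IISState n m) where
  vert σ a := iisView σ.1 m σ.2 a
  label σ := (SAfc n k).label (δ.smap σ)

/-! ## The concrete specification formulas -/

/-- Finite conjunction of a list of formulas (the empty conjunction is the
valid formula `νZ.Z`; all conjunctions used below are over nonempty lists). -/
def conjF {AP Agent : Type} : List (Formula AP Agent) → Formula AP Agent
  | [] => .nu 0 (.var 0)
  | [φ] => φ
  | φ :: l => .and φ (conjF l)

/-- Finite disjunction of a list of formulas (all disjunctions used below are
over nonempty lists). -/
def disjF {AP Agent : Type} : List (Formula AP Agent) → Formula AP Agent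
  | [] => .nu 0 (.var 0)
  | [φ] => φ
  | φ :: l => .or φ (disjF l)

/-- The list of all agents `0,…,n`. -/
def allAgents (n : ℕ) : List (Fin (n + 1)) := List.finRange (n + 1)

/-- All pairs of agents. -/
def agentPairs (n : ℕ) : List (Fin (n + 1) × Fin (n + 1)) :=
  (allAgents n).flatMap (fun i => (allAgents n).map (fun j => (i, j)))

/-- The list of all nonempty subsets of `Π`. -/
noncomputable def neSubsets (n : ℕ) : List (Finset (Fin (n + 1))) :=
  ((Finset.univ : Finset (Fin (n + 1))).powerset.filter (fun A => A.Nonempty)).toList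

/-- `IFUN`: each process has exactly one input value
(`¬(p ∧ q)` is written positively as `¬p ∨ ¬q`). -/
def IFUN (n : ℕ) : Formula (APfc n) (Fin (n + 1)) :=
  conjF ((allAgents n).map (fun a => .and
    (conjF (((agentPairs n).filter (fun p => decide (p.1 ≠ p.2))).map
      (fun p => .or (.natom (Sum.inl (a, p.1))) (.natom (Sum.inl (a, p.2))))))
    (disjF ((allAgents n).map (fun i => .atom (Sum.inl (a, i)))))))

/-- `OFUN`: each process decides exactly one output value. -/
def OFUN (n : ℕ) : Formula (APfc n) (Fin (n + 1)) :=
  conjF ((allAgents n).map (fun a => .and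
    (conjF (((agentPairs n).filter (fun p => decide (p.1 ≠ p.2))).map
      (fun p => .or (.natom (Sum.inr (a, p.1))) (.natom (Sum.inr (a, p.2))))))
    (disjF ((allAgents n).map (fun d => .atom (Sum.inr (a, d)))))))

/-- `VALID`: every decided value is some process's input. -/
def VALIDf (n : ℕ) : Formula (APfc n) (Fin (n + 1)) :=
  conjF ((allAgents n).map (fun a =>
    conjF ((allAgents n).map (fun d =>
      .or (.natom (Sum.inr (a, d)))
          (disjF ((allAgents n).map (fun b => .atom (Sum.inl (b, d)))))))))

/-- `AGREE_k`: at most `k` different values are decided. -/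
noncomputable def AGREEf (n k : ℕ) : Formula (APfc n) (Fin (n + 1)) :=
  disjF ((((Finset.univ : Finset (Fin (n + 1))).powerset.filter
      (fun A => 0 < A.card ∧ A.card ≤ k)).toList).map (fun A =>
    conjF ((allAgents n).map (fun a =>
      disjF (A.toList.map (fun d => .atom (Sum.inr (a, d))))))))

/-- `KNOW`: a decided value is distributed knowledge in any group containing
the decider. -/
noncomputable def KNOWf (n : ℕ) : Formula (APfc n) (Fin (n + 1)) :=
  conjF ((neSubsets n).map (fun A =>
    conjF (A.toList.map (fun a =>
      conjF ((allAgents n).map (fun d =>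
        .or (.natom (Sum.inr (a, d)))
            (.know (↑A) (.atom (Sum.inr (a, d))))))))))

open Fin.NatCast in
/-- `DEC_A = ⋀_{d=0}^{|A|−1} ⋁_{a∈A} decide_{a,d}`. -/
noncomputable def DECf (n : ℕ) (A : Finset (Fin (n + 1))) :
    Formula (APfc n) (Fin (n + 1)) :=
  conjF ((List.range A.card).map (fun d =>
    disjF (A.toList.map (fun a => .atom (Sum.inr (a, (d : Fin (n + 1))))))))

open Fin.NatCast in
/-- `¬DEC_A` in positive (de Morgan) form. -/
noncomputable def NDECf (n : ℕ) (A : Finset (Fin (n + 1))) :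
    Formula (APfc n) (Fin (n + 1)) :=
  disjF ((List.range A.card).map (fun d =>
    conjF (A.toList.map (fun a => .natom (Sum.inr (a, (d : Fin (n + 1))))))))

/-- The unsolvability formula
`Φ_k = νZ.[OFUN ∧ VALID ∧ ⋀_{∅≠A⊆Π}(DEC_A ⇒ D_A(KNOW ∧ AGREE_k ∧ Z))]`. -/
noncomputable def Phi (n k : ℕ) : Formula (APfc n) (Fin (n + 1)) :=
  .nu 0 (.and (OFUN n) (.and (VALIDf n)
    (conjF ((neSubsets n).map (fun A =>
      .or (NDECf n A)
          (.know (↑A) (.and (KNOWf n) (.and (AGREEf n k) (.var 0)))))))))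

/-! ## Restricted-form ordered set partitions and the flip operation -/

/-- The trailing singleton parts `⟨d+1|d+2|…|n⟩`. -/
def trailing (n d : ℕ) : List (Finset (Fin (n + 1))) :=
  ((List.finRange (n + 1)).filter (fun (i : Fin (n + 1)) => decide (d < (i : ℕ)))).map (fun i => {i})

/-- `γ` has the restricted form `⟨A₁|…|A_r|d+1|…|n⟩`, with prefix `l = [A₁,…,A_r]`
an ordered set partition of `[0,d]` followed by the singletons `d+1,…,n`. -/
def RestForm (n d : ℕ) (γ : OSP n) (l : List (Finset (Fin (n + 1)))) : Prop :=
  γ.parts = l ++ trailing n d ∧ ∀ A ∈ l, ∀ a ∈ A, (a : ℕ) ≤ d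

/-- `flip_A` on the prefix `[A₁,…,A_r]`, for `A = [0,d] ∖ {b}`:
moves `b` one position later in the ordered set partition. -/
def flipB {n : ℕ} (b : Fin (n + 1)) :
    List (Finset (Fin (n + 1))) → List (Finset (Fin (n + 1)))
  | [] => []
  | A :: rest =>
    if b ∈ A then
      if 1 < A.card then A.erase b :: {b} :: rest
      else
        match rest with
        | [] => [A]
        | B :: rest' => insert b B :: rest'
    else A :: flipB b rest

/-! ## The input facets `I_d`, the collections `F_d`, and the relation `R^A` -/

open Fin.NatCast in
/-- The input facet `I_d = {(i,i) | i ≤ d} ∪ {(i,d) | d < i}` (as an input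
assignment). -/
def Idf (n d : ℕ) : Fin (n + 1) → Fin (n + 1) :=
  fun i => if (i : ℕ) ≤ d then i else (d : Fin (n + 1))

/-- The collection `F_d ⊆ F(I[IS^m])`: facets `I_d·γ₁·…·γ_m` where every `γ_i`
has the restricted form `⟨A_{i,1}|…|A_{i,r_i}|d+1|…|n⟩`. -/
def Fset (n m d : ℕ) : Set (IISState n m) :=
  {σ | σ.1 = Idf n d ∧ ∀ i, ∃ l, RestForm n d (σ.2 i) l}

/-- The singletons-in-increasing-order partition `⟨0|1|…|n⟩`. -/
def gbar (n : ℕ) : OSP n where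
  parts := (List.finRange (n + 1)).map (fun i => {i})
  nonempty := by
    intro A hA
    rcases List.mem_map.mp hA with ⟨i, _, rfl⟩
    exact Finset.singleton_nonempty i
  pairwise_disjoint := by
    rw [List.pairwise_map]
    exact (List.nodup_finRange (n + 1)).imp
      (fun h => Finset.disjoint_singleton.mpr h)
  cover := by
    intro a
    exact ⟨{a}, List.mem_map.mpr ⟨a, List.mem_finRange a, rfl⟩, Finset.mem_singleton_self a⟩

/-- The relation `R^A` on `⋃_{d=0}^k F_d` (for a morphism
`δ : I[IS^m] → I[SA_k]`): `σ R^A σ'` iff `σ ≈_A σ'`, `σ ≠ σ'`, `A ⊆ [0,|A|]`,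
`σ ∈ F_d`, `σ' ∈ F_e` with `d,e ≤ k`, `max d e = |A|`, `|d − e| ≤ 1`, and both
`σ` and `σ'` satisfy `DEC_A` in `I[IS^m]^{fc,δ}`. -/
noncomputable def Rrel (n m k : ℕ) (δ : SMorphism (IISmodel n m) (SAmodel n k))
    (A : Finset (Fin (n + 1))) (σ σ' : IISState n m) : Prop :=
  (IISmodel n m).toKModel.relD (↑A) σ σ' ∧ σ ≠ σ' ∧
  (∀ a ∈ A, (a : ℕ) ≤ A.card) ∧
  (∃ d e : ℕ, d ≤ k ∧ e ≤ k ∧ σ ∈ Fset n m d ∧ σ' ∈ Fset n m e ∧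
    max d e = A.card ∧ d ≤ e + 1 ∧ e ≤ d + 1) ∧
  ModelsS (IISfc n m k δ) σ (DECf n A) ∧ ModelsS (IISfc n m k δ) σ' (DECf n A)

/-! ## Carrier sets, contention sets, and the k-concurrency model -/

/-- `carrier_a(X·γ₁·γ₂) = ⋃_{b ∈ view*_a(γ₂)} view*_b(γ₁)`. -/
def carrierSet (n : ℕ) (σ : IISState n 2) (a : Fin (n + 1)) : Finset (Fin (n + 1)) :=
  ((σ.2 1).viewSet a).biUnion (σ.2 0).viewSet

/-- The contention sets of a facet of `I[IS^2]`. -/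
def ContSets (n : ℕ) (σ : IISState n 2) : Set (Finset (Fin (n + 1))) :=
  {A | ∀ a ∈ A, carrierSet n σ a = A.biUnion (carrierSet n σ)}

/-- The facets of the `k`-concurrency model `R_k`. -/
def kConcStates (n k : ℕ) : Set (IISState n 2) :=
  {σ | ∀ A ∈ ContSets n σ, A.card ≤ k}

/-- The `k`-concurrency model `R_k`, the simplicial submodel of `I[IS^2]` on
the facets in `kConcStates`. -/
def RModel (n k : ℕ) : SModel n (View n) (APfc n) {σ : IISState n 2 // σ ∈ kConcStates n k} where
  vert σ a := iisView σ.val.1 2 σ.val.2 a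
  label σ := {p | ∃ a, p = Sum.inl (a, σ.val.1 a)}

/-! ## Auxiliary development: chromatic Sperner lemma for iterated
immediate snapshot executions -/

namespace KSA

open Finset

variable {n : ℕ}

/-- The view set of `a` in the round encoded by the part-index function `f`. -/
def vsF (S : Finset (Fin (n + 1))) (f : Fin (n + 1) → Fin (n + 1)) (a : Fin (n + 1)) :
    Finset (Fin (n + 1)) := S.filter (fun b => f b ≤ f a)

/-- `f` is a canonical encoding of an ordered set partition of `S`:
zero off `S`, and the values on `S` form an initial segment. -/
def isRnd (S : Finset (Fin (n + 1))) (f : Fin (n + 1) → Fin (n + 1)) : Prop :=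
  (∀ c, c ∉ S → f c = 0) ∧ ∀ a ∈ S, ∀ j : Fin (n + 1), j < f a → ∃ c ∈ S, f c = j

open scoped Classical in
noncomputable def Rnd (S : Finset (Fin (n + 1))) : Finset (Fin (n + 1) → Fin (n + 1)) :=
  Finset.univ.filter (isRnd S)

lemma mem_Rnd {S : Finset (Fin (n + 1))} {f} : f ∈ Rnd S ↔ isRnd S f := by
  classical
  rw [Rnd, Finset.mem_filter]
  simp

noncomputable def Execs (S : Finset (Fin (n + 1))) :
    ℕ → Finset (List (Fin (n + 1) → Fin (n + 1)))
  | 0 => {[]}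
  | m + 1 => ((Rnd S) ×ˢ (Execs S m)).image (fun p => p.1 :: p.2)

lemma mem_Execs {S : Finset (Fin (n + 1))} :
    ∀ {m L}, L ∈ Execs S m ↔ (L.length = m ∧ ∀ f ∈ L, f ∈ Rnd S) := by
  intro m
  induction m with
  | zero =>
    intro L
    simp only [Execs, mem_singleton]
    constructor
    · rintro rfl; exact ⟨rfl, by simp⟩
    · rintro ⟨h, -⟩; exact List.length_eq_zero_iff.1 h
  | succ m ih =>
    intro L
    simp only [Execs, mem_image, mem_product, Prod.exists]
    constructor
    · rintro ⟨f, L₂, ⟨hf, hL₂⟩, rfl⟩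
      obtain ⟨h1, h2⟩ := ih.1 hL₂
      refine ⟨by simp [h1], ?_⟩
      intro g hg
      rcases List.mem_cons.1 hg with rfl | hg
      · exact hf
      · exact h2 g hg
    · rintro ⟨h1, h2⟩
      cases L with
      | nil => simp at h1
      | cons f L₂ =>
        exact ⟨f, L₂, ⟨h2 f (by simp),
          ih.2 ⟨by simpa using h1, fun g hg => h2 g (by simp [hg])⟩⟩, rfl⟩

lemma exec_cons {S : Finset (Fin (n + 1))} {m : ℕ} {L} (hL : L ∈ Execs S (m + 1)) :
    ∃ f L₂, L = f :: L₂ ∧ f ∈ Rnd S ∧ L₂ ∈ Execs S m := by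
  obtain ⟨hlen, hmem⟩ := mem_Execs.1 hL
  cases L with
  | nil => simp at hlen
  | cons f L₂ =>
    exact ⟨f, L₂, rfl, hmem f (by simp),
      mem_Execs.2 ⟨by simpa using hlen, fun g hg => hmem g (by simp [hg])⟩⟩

lemma cons_mem_Execs {S : Finset (Fin (n + 1))} {m : ℕ} {f L₂} (hf : f ∈ Rnd S)
    (hL₂ : L₂ ∈ Execs S m) : f :: L₂ ∈ Execs S (m + 1) := by
  obtain ⟨h1, h2⟩ := mem_Execs.1 hL₂
  refine mem_Execs.2 ⟨by simp [h1], ?_⟩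
  intro g hg
  rcases List.mem_cons.1 hg with rfl | hg
  · exact hf
  · exact h2 g hg

/-- The iterated view of process `a` (input assignment `X`, rounds listed
last round first). -/
def lviewX (X : Fin (n + 1) → Fin (n + 1)) (S : Finset (Fin (n + 1))) :
    List (Fin (n + 1) → Fin (n + 1)) → Fin (n + 1) → View n
  | [], a => .base (X a)
  | f :: L, a => .snap (fun b => if b ∈ vsF S f a then some (lviewX X S L b) else none)

/-- The iterated view with the identity input assignment. -/
def lvw (S : Finset (Fin (n + 1))) (L : List (Fin (n + 1) → Fin (n + 1)))
    (a : Fin (n + 1)) : View n := lviewX id S L a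

/-- The carrier (set of processes seen by `a`). -/
def lcar (S : Finset (Fin (n + 1))) :
    List (Fin (n + 1) → Fin (n + 1)) → Fin (n + 1) → Finset (Fin (n + 1))
  | [], a => {a}
  | f :: L, a => (vsF S f a).biUnion (lcar S L)

lemma mem_vsF {S : Finset (Fin (n + 1))} {f a b} :
    b ∈ vsF S f a ↔ b ∈ S ∧ f b ≤ f a := by simp [vsF]

lemma self_mem_vsF {S : Finset (Fin (n + 1))} {f a} (ha : a ∈ S) : a ∈ vsF S f a :=
  mem_vsF.2 ⟨ha, le_refl _⟩

lemma vsF_subset {S : Finset (Fin (n + 1))} {f a} : vsF S f a ⊆ S := filter_subset _ _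

lemma lcar_subset {S : Finset (Fin (n + 1))} :
    ∀ {L a}, a ∈ S → lcar S L a ⊆ S := by
  intro L
  induction L with
  | nil => intro a ha; simpa [lcar] using ha
  | cons f L ih =>
    intro a _
    simp only [lcar]
    exact Finset.biUnion_subset.2 (fun c hc => ih ((mem_vsF.1 hc).1))

lemma self_mem_lcar {S : Finset (Fin (n + 1))} :
    ∀ {L a}, a ∈ S → a ∈ lcar S L a := by
  intro L
  induction L with
  | nil => intro a ha; simp [lcar]
  | cons f L ih =>
    intro a ha
    simp only [lcar]
    exact Finset.mem_biUnion.2 ⟨a, self_mem_vsF ha, ih ha⟩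

lemma lviewX_congr {S : Finset (Fin (n + 1))} {X X' : Fin (n + 1) → Fin (n + 1)} :
    ∀ {L a}, (∀ c ∈ lcar S L a, X c = X' c) → lviewX X S L a = lviewX X' S L a := by
  intro L
  induction L with
  | nil =>
    intro a h
    simp only [lviewX]
    rw [h a (by simp [lcar])]
  | cons f L ih =>
    intro a h
    simp only [lviewX]
    congr 1
    funext c
    by_cases hc : c ∈ vsF S f a
    · simp only [if_pos hc]
      congr 1
      exact ih (fun d hd => h d (by simp only [lcar]; exact Finset.mem_biUnion.2 ⟨c, hc, hd⟩))
    · simp [hc]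

/-! ### Canonicalization of rounds -/

/-- The rank normalization of an arbitrary `ℕ`-valued intensity function. -/
noncomputable def normF (S : Finset (Fin (n + 1))) (h : Fin (n + 1) → ℕ)
    (a : Fin (n + 1)) : Fin (n + 1) :=
  if ha : a ∈ S then
    ⟨((S.image h).filter (· < h a)).card, by
      have h1 : ((S.image h).filter (· < h a)) ⊂ S.image h := by
        refine Finset.ssubset_iff_of_subset (filter_subset _ _) |>.2 ⟨h a, mem_image_of_mem _ ha, by simp⟩
      calc ((S.image h).filter (· < h a)).card < (S.image h).card := card_lt_card h1
        _ ≤ S.card := card_image_le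
        _ ≤ (Finset.univ : Finset (Fin (n+1))).card := card_le_univ _
        _ = n + 1 := by simp⟩
  else 0

lemma normF_le {S : Finset (Fin (n + 1))} {h : Fin (n + 1) → ℕ} {a b : Fin (n + 1)}
    (ha : a ∈ S) (hb : b ∈ S) : normF S h b ≤ normF S h a ↔ h b ≤ h a := by
  rw [normF, dif_pos hb, normF, dif_pos ha, Fin.mk_le_mk]
  constructor
  · intro hc
    by_contra hab
    push_neg at hab
    have hss : ((S.image h).filter (· < h a)) ⊂ ((S.image h).filter (· < h b)) := by
      refine (Finset.ssubset_iff_of_subset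
        (Finset.monotone_filter_right _ (fun x _ hx => lt_trans hx hab))).2 ?_
      exact ⟨h a, Finset.mem_filter.2 ⟨mem_image_of_mem _ ha, hab⟩, by simp⟩
    exact absurd hc (not_le.2 (card_lt_card hss))
  · intro hba
    exact card_le_card (Finset.monotone_filter_right _ (fun x _ hx => lt_of_lt_of_le hx hba))

lemma vsF_normF {S : Finset (Fin (n + 1))} {h : Fin (n + 1) → ℕ} {a : Fin (n + 1)}
    (ha : a ∈ S) : vsF S (normF S h) a = S.filter (fun b => h b ≤ h a) := by
  ext c
  simp only [mem_vsF, Finset.mem_filter]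
  exact and_congr_right (fun hc => normF_le ha hc)

lemma rank_attained {V : Finset ℕ} {j : ℕ} (hj : j < V.card) :
    ∃ w ∈ V, (V.filter (· < w)).card = j := by
  classical
  set e := V.orderIsoOfFin rfl with he
  refine ⟨e ⟨j, hj⟩, (e ⟨j, hj⟩).2, ?_⟩
  have himg : V.filter (· < (e ⟨j, hj⟩ : ℕ))
      = (Finset.univ.filter (fun i : Fin V.card => i < ⟨j, hj⟩)).image
          (fun i => (e i : ℕ)) := by
    ext v
    simp only [Finset.mem_filter, Finset.mem_image, Finset.mem_univ, true_and]
    constructor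
    · rintro ⟨hv, hlt⟩
      refine ⟨e.symm ⟨v, hv⟩, ?_, by simp⟩
      rw [← e.lt_iff_lt, OrderIso.apply_symm_apply]
      exact Subtype.coe_lt_coe.1 hlt
    · rintro ⟨i, hi, rfl⟩
      exact ⟨(e i).2, Subtype.coe_lt_coe.2 (e.lt_iff_lt.2 hi)⟩
  have hinj : Function.Injective (fun i : Fin V.card => (e i : ℕ)) :=
    fun i i' hii => e.injective (Subtype.coe_injective hii)
  rw [himg, Finset.card_image_of_injective _ hinj]
  have : (Finset.univ.filter (fun i : Fin V.card => i < ⟨j, hj⟩)) = Finset.Iio ⟨j, hj⟩ := by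
    ext i; simp
  rw [this, Fin.card_Iio]

lemma normF_mem {S : Finset (Fin (n + 1))} {h : Fin (n + 1) → ℕ} :
    normF S h ∈ Rnd S := by
  rw [mem_Rnd]
  constructor
  · intro c hc; rw [normF, dif_neg hc]
  · intro a ha j hj
    rw [normF, dif_pos ha] at hj
    have hj' : (j : ℕ) < ((S.image h).filter (· < h a)).card := hj
    obtain ⟨w, hw, hcard⟩ := rank_attained (lt_of_lt_of_le hj'
      (card_le_card (filter_subset _ _)))
    obtain ⟨c, hc, rfl⟩ := Finset.mem_image.1 hw
    refine ⟨c, hc, ?_⟩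
    rw [normF, dif_pos hc]
    exact Fin.ext hcard

/-- A canonical round is determined by its view sets. -/
lemma image_vsF_eq_Iic {S : Finset (Fin (n + 1))} {f : Fin (n + 1) → Fin (n + 1)}
    (hf : isRnd S f) {a : Fin (n + 1)} (ha : a ∈ S) :
    (vsF S f a).image f = Finset.Iic (f a) := by
  ext j
  simp only [Finset.mem_image, Finset.mem_Iic]
  constructor
  · rintro ⟨c, hc, rfl⟩; exact (mem_vsF.1 hc).2
  · intro hj
    rcases eq_or_lt_of_le hj with rfl | hlt
    · exact ⟨a, self_mem_vsF ha, rfl⟩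
    · obtain ⟨c, hc, hfc⟩ := hf.2 a ha j hlt
      exact ⟨c, mem_vsF.2 ⟨hc, le_of_eq_of_le hfc hj⟩, hfc⟩

lemma rank_formula {S : Finset (Fin (n + 1))} {f : Fin (n + 1) → Fin (n + 1)}
    (hf : isRnd S f) {a : Fin (n + 1)} (ha : a ∈ S) :
    ((f a : ℕ)) + 1 = ((vsF S f a).image (vsF S f)).card := by
  have h1 : (vsF S f a).image (vsF S f)
      = ((vsF S f a).image f).image (fun v => S.filter (fun b => f b ≤ v)) := by
    rw [Finset.image_image]
    rfl
  have h2 : Set.InjOn (fun v => S.filter (fun b => f b ≤ v))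
      ↑((vsF S f a).image f) := by
    intro v hv w hw hvw
    simp only [Finset.coe_image, Set.mem_image, Finset.mem_coe] at hv hw
    obtain ⟨c, hc, rfl⟩ := hv
    obtain ⟨c', hc', rfl⟩ := hw
    have hcS : c ∈ S := vsF_subset hc
    have hc'S : c' ∈ S := vsF_subset hc'
    have h3 : c' ∈ S.filter (fun b => f b ≤ f c') := Finset.mem_filter.2 ⟨hc'S, le_refl _⟩
    have h4 : c ∈ S.filter (fun b => f b ≤ f c) := Finset.mem_filter.2 ⟨hcS, le_refl _⟩
    have hvw' : S.filter (fun b => f b ≤ f c) = S.filter (fun b => f b ≤ f c') := hvw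
    rw [← hvw'] at h3
    rw [hvw'] at h4
    exact le_antisymm (Finset.mem_filter.1 h4).2 (Finset.mem_filter.1 h3).2
  rw [h1, Finset.card_image_of_injOn h2, image_vsF_eq_Iic hf ha, Fin.card_Iic]

lemma vsF_inj {S : Finset (Fin (n + 1))} {f g : Fin (n + 1) → Fin (n + 1)}
    (hf : f ∈ Rnd S) (hg : g ∈ Rnd S)
    (h : ∀ a ∈ S, vsF S f a = vsF S g a) : f = g := by
  rw [mem_Rnd] at hf hg
  funext a
  by_cases ha : a ∈ S
  · have h1 := rank_formula hf ha
    have h2 := rank_formula hg ha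
    have himg : (vsF S f a).image (vsF S f) = (vsF S g a).image (vsF S g) := by
      rw [h a ha]
      exact Finset.image_congr (fun c hc => h c (vsF_subset hc))
    rw [himg] at h1
    exact Fin.ext (Nat.succ_injective (h1.trans h2.symm))
  · rw [hf.1 a ha, hg.1 a ha]

/-- Extracting information from equal one-round views. -/
lemma cons_view_eq {X : Fin (n + 1) → Fin (n + 1)} {S : Finset (Fin (n + 1))}
    {f g : Fin (n + 1) → Fin (n + 1)} {L L' : List (Fin (n + 1) → Fin (n + 1))}
    {a : Fin (n + 1)} (h : lviewX X S (f :: L) a = lviewX X S (g :: L') a) :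
    vsF S f a = vsF S g a ∧ ∀ c ∈ vsF S f a, lviewX X S L c = lviewX X S L' c := by
  simp only [lviewX] at h
  have h' := View.snap.inj h
  have hset : vsF S f a = vsF S g a := by
    ext c
    have hc := congrFun h' c
    by_cases h1 : c ∈ vsF S f a <;> by_cases h2 : c ∈ vsF S g a <;>
      simp [h1, h2] at hc ⊢
  refine ⟨hset, fun c hc => ?_⟩
  have hc' := congrFun h' c
  rw [if_pos hc, if_pos (hset ▸ hc)] at hc'
  exact Option.some.inj hc'

/-- Injectivity: the views of all members of `S` determine the execution. -/
lemma lvw_inj {S : Finset (Fin (n + 1))} :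
    ∀ {m L L'}, L ∈ Execs S m → L' ∈ Execs S m →
      (∀ a ∈ S, lvw S L a = lvw S L' a) → L = L' := by
  intro m
  induction m with
  | zero =>
    intro L L' hL hL' _
    rw [List.length_eq_zero_iff.1 (mem_Execs.1 hL).1, List.length_eq_zero_iff.1 (mem_Execs.1 hL').1]
  | succ m ih =>
    intro L L' hL hL' hv
    obtain ⟨f, L₂, rfl, hf, hL₂⟩ := exec_cons hL
    obtain ⟨g, L₂', rfl, hg, hL₂'⟩ := exec_cons hL'
    have h1 := fun a ha => cons_view_eq (hv a ha)
    have hfg : f = g := vsF_inj hf hg (fun a ha => (h1 a ha).1)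
    have h2 : L₂ = L₂' := ih hL₂ hL₂' (fun a ha => (h1 a ha).2 a (self_mem_vsF ha))
    rw [hfg, h2]

/-! ### One-round ridge classification (the flip) -/

open scoped Classical in
/-- The one-round match set of `f` at color `b`. -/
noncomputable def rmatch (S : Finset (Fin (n + 1))) (b : Fin (n + 1))
    (f : Fin (n + 1) → Fin (n + 1)) : Finset (Fin (n + 1) → Fin (n + 1)) :=
  (Rnd S).filter (fun f' => ∀ a ∈ S.erase b, vsF S f' a = vsF S f a)

lemma vs_nat_le {f : Fin (n + 1) → Fin (n + 1)} {c a : Fin (n + 1)} :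
    f c ≤ f a ↔ (f c : ℕ) ≤ (f a : ℕ) := Fin.le_def

lemma ridge_one {S : Finset (Fin (n + 1))} {b : Fin (n + 1)}
    {f : Fin (n + 1) → Fin (n + 1)} (hf : f ∈ Rnd S) (hb : b ∈ S)
    (hW : ∃ a ∈ S.erase b, f b ≤ f a) :
    ∃ g₁ g₂, g₁ ≠ g₂ ∧ rmatch S b f = {g₁, g₂} := by
  classical
  obtain ⟨aw, hawe, hawle⟩ := hW
  set R : Finset (Fin (n + 1)) := (S.erase b).filter (fun a => f b ≤ f a) with hRdef
  have hRne : R.Nonempty := ⟨aw, Finset.mem_filter.2 ⟨hawe, hawle⟩⟩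
  set v₀ : ℕ := (R.image (fun a => (f a : ℕ))).min' (hRne.image _) with hv₀def
  obtain ⟨a₀, ha₀R, ha₀⟩ := Finset.mem_image.1 ((R.image (fun a => (f a : ℕ))).min'_mem (hRne.image _))
  rw [← hv₀def] at ha₀
  have ha₀e : a₀ ∈ S.erase b := (Finset.mem_filter.1 ha₀R).1
  have ha₀S : a₀ ∈ S := (Finset.mem_erase.1 ha₀e).2
  have ha₀b : a₀ ≠ b := (Finset.mem_erase.1 ha₀e).1
  have hfb_le : (f b : ℕ) ≤ v₀ := by
    rw [← ha₀]
    exact Fin.le_def.1 (Finset.mem_filter.1 ha₀R).2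
  have hv₀min : ∀ a ∈ R, v₀ ≤ (f a : ℕ) :=
    fun a haR => Finset.min'_le _ _ (mem_image_of_mem _ haR)
  have hkey : ∀ a ∈ S.erase b, (f b ≤ f a ↔ v₀ ≤ (f a : ℕ)) := by
    intro a hae
    constructor
    · intro hle; exact hv₀min a (Finset.mem_filter.2 ⟨hae, hle⟩)
    · intro hge; exact Fin.le_def.2 (le_trans hfb_le hge)
  set h₁ : Fin (n + 1) → ℕ := fun c => if c = b then 2 * v₀ + 2 else 2 * (f c : ℕ) + 2 with hh₁
  set h₂ : Fin (n + 1) → ℕ := fun c => if c = b then 2 * v₀ + 1 else 2 * (f c : ℕ) + 2 with hh₂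
  have hmatch : ∀ (h' : Fin (n + 1) → ℕ), (∀ c, c ≠ b → h' c = 2 * (f c : ℕ) + 2) →
      (∀ a ∈ S.erase b, ((h' b ≤ h' a) ↔ f b ≤ f a)) →
      ∀ a ∈ S.erase b, vsF S (normF S h') a = vsF S f a := by
    intro h' hoff hcomp a hae
    have haS : a ∈ S := (Finset.mem_erase.1 hae).2
    rw [vsF_normF haS]
    ext c
    simp only [Finset.mem_filter, mem_vsF]
    refine and_congr_right (fun hcS => ?_)
    by_cases hcb : c = b
    · subst hcb; exact hcomp a hae
    · rw [hoff c hcb, hoff a (Finset.mem_erase.1 hae).1]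
      rw [vs_nat_le]
      omega
  have hcomp1 : ∀ a ∈ S.erase b, ((h₁ b ≤ h₁ a) ↔ f b ≤ f a) := by
    intro a hae
    have hab : a ≠ b := (Finset.mem_erase.1 hae).1
    simp only [hh₁, if_pos rfl, if_neg hab]
    rw [hkey a hae]
    omega
  have hcomp2 : ∀ a ∈ S.erase b, ((h₂ b ≤ h₂ a) ↔ f b ≤ f a) := by
    intro a hae
    have hab : a ≠ b := (Finset.mem_erase.1 hae).1
    simp only [hh₂, if_pos rfl, if_neg hab]
    rw [hkey a hae]
    omega
  have hoff1 : ∀ c, c ≠ b → h₁ c = 2 * (f c : ℕ) + 2 := by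
    intro c hcb; simp only [hh₁, if_neg hcb]
  have hoff2 : ∀ c, c ≠ b → h₂ c = 2 * (f c : ℕ) + 2 := by
    intro c hcb; simp only [hh₂, if_neg hcb]
  have hm1 := hmatch h₁ hoff1 hcomp1
  have hm2 := hmatch h₂ hoff2 hcomp2
  have hne : normF S h₁ ≠ normF S h₂ := by
    intro heq
    have e1 : a₀ ∈ vsF S (normF S h₁) b := by
      rw [vsF_normF hb]
      refine Finset.mem_filter.2 ⟨ha₀S, ?_⟩
      simp only [hh₁, if_neg ha₀b, if_pos rfl, ha₀]
      omega
    have e2 : a₀ ∉ vsF S (normF S h₂) b := by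
      rw [vsF_normF hb]
      intro hmem
      have h6 := (Finset.mem_filter.1 hmem).2
      simp only [hh₂, if_neg ha₀b, if_pos rfl, ha₀] at h6
      omega
    rw [heq] at e1
    exact e2 e1
  refine ⟨normF S h₁, normF S h₂, hne, ?_⟩
  ext f'
  simp only [rmatch, Finset.mem_filter, Finset.mem_insert, Finset.mem_singleton]
  constructor
  · rintro ⟨hf'R, hvs⟩
    have hiff : ∀ a ∈ S.erase b, (f' b ≤ f' a ↔ f b ≤ f a) := by
      intro a hae
      have h7 : (b ∈ vsF S f' a) ↔ (b ∈ vsF S f a) := by rw [hvs a hae]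
      simpa [mem_vsF, hb] using h7
    by_cases hmerge : ∃ c ∈ S.erase b, f' c ≤ f' b ∧ f b ≤ f c
    · left
      obtain ⟨c, hce, hc1, hc2⟩ := hmerge
      have hcS : c ∈ S := (Finset.mem_erase.1 hce).2
      have hcb' : f' b ≤ f' c := by
        have h8 : b ∈ vsF S f c := mem_vsF.2 ⟨hb, hc2⟩
        rw [← hvs c hce] at h8
        exact (mem_vsF.1 h8).2
      have hfbc : f' b = f' c := le_antisymm hcb' hc1
      have hfc : (f c : ℕ) = v₀ := by
        refine le_antisymm ?_ (hv₀min c (Finset.mem_filter.2 ⟨hce, hc2⟩))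
        rw [← ha₀]
        obtain ⟨hae, hba⟩ := Finset.mem_filter.1 ha₀R
        have h9 : f' b ≤ f' a₀ := (hiff a₀ hae).2 hba
        have h10 : c ∈ vsF S f' a₀ := mem_vsF.2 ⟨hcS, le_trans hc1 h9⟩
        rw [hvs a₀ hae] at h10
        exact Fin.le_def.1 (mem_vsF.1 h10).2
      refine vsF_inj hf'R normF_mem ?_
      intro x hxS
      by_cases hxb : x = b
      · subst hxb
        rw [vsF_normF hxS]
        ext y
        simp only [mem_vsF, Finset.mem_filter]
        refine and_congr_right (fun hyS => ?_)
        by_cases hyb : y = x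
        · subst hyb; simp
        · have hye : y ∈ S.erase x := Finset.mem_erase.2 ⟨hyb, hyS⟩
          simp only [hh₁, if_neg hyb, if_pos rfl]
          constructor
          · intro hle
            have h11 : y ∈ vsF S f' c := mem_vsF.2 ⟨hyS, by rw [← hfbc]; exact hle⟩
            rw [hvs c hce] at h11
            have h12 := Fin.le_def.1 (mem_vsF.1 h11).2
            omega
          · intro hle
            have h13 : (f y : ℕ) ≤ (f c : ℕ) := by omega
            have h14 : y ∈ vsF S f c := mem_vsF.2 ⟨hyS, Fin.le_def.2 h13⟩
            rw [← hvs c hce] at h14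
            exact le_trans (mem_vsF.1 h14).2 hc1
      · have hxe : x ∈ S.erase b := Finset.mem_erase.2 ⟨hxb, hxS⟩
        rw [hvs x hxe, ← hm1 x hxe]
    · right
      push_neg at hmerge
      refine vsF_inj hf'R normF_mem ?_
      intro x hxS
      by_cases hxb : x = b
      · subst hxb
        rw [vsF_normF hxS]
        ext y
        simp only [mem_vsF, Finset.mem_filter]
        refine and_congr_right (fun hyS => ?_)
        by_cases hyb : y = x
        · subst hyb; simp
        · have hye : y ∈ S.erase x := Finset.mem_erase.2 ⟨hyb, hyS⟩
          simp only [hh₂, if_neg hyb, if_pos rfl]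
          constructor
          · intro hle
            have h15 : ¬ f x ≤ f y := not_le.2 (hmerge y hye hle)
            have h16 : ¬ v₀ ≤ (f y : ℕ) := fun hc => h15 ((hkey y hye).2 hc)
            omega
          · intro hle
            have h17 : ¬ v₀ ≤ (f y : ℕ) := by omega
            have h18 : ¬ f x ≤ f y := fun hc => h17 ((hkey y hye).1 hc)
            have h19 : x ∉ vsF S f y := fun hc => h18 (mem_vsF.1 hc).2
            rw [← hvs y hye] at h19
            have h20 : ¬ f' x ≤ f' y := fun hc => h19 (mem_vsF.2 ⟨hxS, hc⟩)
            exact le_of_not_ge h20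
      · have hxe : x ∈ S.erase b := Finset.mem_erase.2 ⟨hxb, hxS⟩
        rw [hvs x hxe, ← hm2 x hxe]
  · intro hcase
    rcases hcase with rfl | rfl
    · exact ⟨normF_mem, hm1⟩
    · exact ⟨normF_mem, hm2⟩

lemma ridge_last {S : Finset (Fin (n + 1))} {b : Fin (n + 1)}
    {f : Fin (n + 1) → Fin (n + 1)} (hf : f ∈ Rnd S) (hb : b ∈ S)
    (hW : ∀ a ∈ S.erase b, ¬ f b ≤ f a) :
    rmatch S b f = {f} := by
  classical
  ext f'
  simp only [rmatch, Finset.mem_filter, Finset.mem_singleton]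
  constructor
  · rintro ⟨hf', hvs⟩
    refine vsF_inj hf' hf ?_
    intro a ha
    by_cases hab : a = b
    · subst hab
      have e1 : vsF S f' a = S := by
        ext x
        simp only [mem_vsF]
        refine ⟨fun hx => hx.1, fun hx => ⟨hx, ?_⟩⟩
        by_cases hxb : x = a
        · subst hxb; exact le_refl _
        · have hxe : x ∈ S.erase a := Finset.mem_erase.2 ⟨hxb, hx⟩
          have h1 : a ∉ vsF S f x := fun hmem => hW x hxe (mem_vsF.1 hmem).2
          have h2 : a ∉ vsF S f' x := by rw [hvs x hxe]; exact h1
          exact le_of_not_ge (fun hle => h2 (mem_vsF.2 ⟨ha, hle⟩))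
      have e2 : vsF S f a = S := by
        ext x
        simp only [mem_vsF]
        refine ⟨fun hx => hx.1, fun hx => ⟨hx, ?_⟩⟩
        by_cases hxb : x = a
        · subst hxb; exact le_refl _
        · exact le_of_not_ge (hW x (Finset.mem_erase.2 ⟨hxb, hx⟩))
      rw [e1, e2]
    · exact hvs a (Finset.mem_erase.2 ⟨hab, ha⟩)
  · rintro rfl
    exact ⟨hf, fun a _ => rfl⟩

/-! ### Multi-round ridge classification -/

open scoped Classical in
/-- The match set (facets sharing the ridge of `L` opposite color `b`). -/
noncomputable def Mset (S : Finset (Fin (n + 1))) (m : ℕ) (b : Fin (n + 1))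
    (L : List (Fin (n + 1) → Fin (n + 1))) : Finset (List (Fin (n + 1) → Fin (n + 1))) :=
  (Execs S m).filter (fun L' => ∀ a ∈ S.erase b, lvw S L' a = lvw S L a)

/-- The carrier of the ridge opposite `b`. -/
noncomputable def Uset (S : Finset (Fin (n + 1))) (b : Fin (n + 1))
    (L : List (Fin (n + 1) → Fin (n + 1))) : Finset (Fin (n + 1)) :=
  (S.erase b).biUnion (lcar S L)

lemma Mset_spec {S : Finset (Fin (n + 1))} {b : Fin (n + 1)} (hb : b ∈ S) :
    ∀ (m : ℕ) (L : List (Fin (n + 1) → Fin (n + 1))), L ∈ Execs S m →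
      (Uset S b L = S → (Mset S m b L).card = 2) ∧
      (Uset S b L ≠ S → Mset S m b L = {L}) := by
  classical
  intro m
  induction m with
  | zero =>
    intro L hL
    have hL0 : L = [] := List.length_eq_zero_iff.1 (mem_Execs.1 hL).1
    subst hL0
    have hU : Uset S b [] = S.erase b := by
      ext x; simp [Uset, lcar]
    constructor
    · intro h
      rw [hU] at h
      exact absurd (Finset.erase_eq_self.1 h) (by simpa using hb)
    · intro _
      ext L'
      simp only [Mset, Finset.mem_filter, Finset.mem_singleton]
      constructor
      · rintro ⟨h1, _⟩; exact List.length_eq_zero_iff.1 (mem_Execs.1 h1).1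
      · rintro rfl; exact ⟨hL, fun a _ => rfl⟩
  | succ m ih =>
    intro L hL
    obtain ⟨f, L₂, rfl, hfR, hL₂⟩ := exec_cons hL
    by_cases hWc : ∃ a ∈ S.erase b, f b ≤ f a
    · have hU : Uset S b (f :: L₂) = S := by
        apply Finset.Subset.antisymm
        · exact Finset.biUnion_subset.2
            (fun a ha => lcar_subset (Finset.mem_erase.1 ha).2)
        · intro x hx
          by_cases hxb : x = b
          · subst hxb
            obtain ⟨a, hae, hble⟩ := hWc
            refine Finset.mem_biUnion.2 ⟨a, hae, ?_⟩
            simp only [lcar]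
            exact Finset.mem_biUnion.2 ⟨x, mem_vsF.2 ⟨hx, hble⟩, self_mem_lcar hx⟩
          · exact Finset.mem_biUnion.2 ⟨x, Finset.mem_erase.2 ⟨hxb, hx⟩, self_mem_lcar hx⟩
      refine ⟨fun _ => ?_, fun hne => absurd hU hne⟩
      have hMeq : Mset S (m + 1) b (f :: L₂) = (rmatch S b f).image (fun g => g :: L₂) := by
        ext L'
        simp only [Mset, rmatch, Finset.mem_filter, Finset.mem_image]
        constructor
        · rintro ⟨hL', hvs⟩
          obtain ⟨f', L₂', rfl, hf'R, hL₂'⟩ := exec_cons hL'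
          have hcv := fun a ha => cons_view_eq (hvs a ha)
          have hL₂eq : L₂' = L₂ := by
            refine lvw_inj hL₂' hL₂ ?_
            intro c hcS
            by_cases hcb : c = b
            · subst hcb
              obtain ⟨a, hae, hble⟩ := hWc
              exact (hcv a hae).2 c (by rw [(hcv a hae).1]; exact mem_vsF.2 ⟨hcS, hble⟩)
            · exact (hcv c (Finset.mem_erase.2 ⟨hcb, hcS⟩)).2 c (self_mem_vsF hcS)
          subst hL₂eq
          exact ⟨f', ⟨hf'R, fun a ha => (hcv a ha).1⟩, rfl⟩
        · rintro ⟨g, ⟨hgR, hgvs⟩, rfl⟩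
          refine ⟨cons_mem_Execs hgR hL₂, ?_⟩
          intro a ha
          show lviewX id S (g :: L₂) a = lviewX id S (f :: L₂) a
          simp only [lviewX]
          congr 1
          funext cc
          rw [hgvs a ha]
      rw [hMeq]
      obtain ⟨g₁, g₂, hgne, hrm⟩ := ridge_one hfR hb hWc
      have hinj : Function.Injective (fun g : Fin (n + 1) → Fin (n + 1) => g :: L₂) :=
        fun x y hxy => by simpa using hxy
      rw [hrm, Finset.card_image_of_injective _ hinj, Finset.card_pair hgne]
    · have hWn : ∀ a ∈ S.erase b, ¬ f b ≤ f a := by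
        intro a ha hle; exact hWc ⟨a, ha, hle⟩
      have hUeq : Uset S b (f :: L₂) = Uset S b L₂ := by
        ext x
        simp only [Uset, Finset.mem_biUnion, lcar]
        constructor
        · rintro ⟨a, hae, hx⟩
          rcases hx with ⟨c, hcv, hxc⟩
          have hcS : c ∈ S := (mem_vsF.1 hcv).1
          have hcb : c ≠ b := fun hcb => hWn a hae (hcb ▸ (mem_vsF.1 hcv).2)
          exact ⟨c, Finset.mem_erase.2 ⟨hcb, hcS⟩, hxc⟩
        · rintro ⟨c, hce, hx⟩
          exact ⟨c, hce, ⟨c, self_mem_vsF (Finset.mem_erase.1 hce).2, hx⟩⟩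
      have hMeq : Mset S (m + 1) b (f :: L₂) = (Mset S m b L₂).image (fun L' => f :: L') := by
        ext L'
        simp only [Mset, Finset.mem_filter, Finset.mem_image]
        constructor
        · rintro ⟨hL', hvs⟩
          obtain ⟨f', L₂', rfl, hf'R, hL₂'⟩ := exec_cons hL'
          have hcv := fun a ha => cons_view_eq (hvs a ha)
          have hf'f : f' = f := by
            have hmem : f' ∈ rmatch S b f :=
              Finset.mem_filter.2 ⟨hf'R, fun a ha => (hcv a ha).1⟩
            rw [ridge_last hfR hb hWn] at hmem
            exact Finset.mem_singleton.1 hmem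
          subst hf'f
          refine ⟨L₂', ⟨hL₂', ?_⟩, rfl⟩
          intro a ha
          exact (hcv a ha).2 a (self_mem_vsF (Finset.mem_erase.1 ha).2)
        · rintro ⟨L₂', ⟨hL₂'m, hvs'⟩, rfl⟩
          refine ⟨cons_mem_Execs hfR hL₂'m, ?_⟩
          intro a ha
          show lviewX id S (f :: L₂') a = lviewX id S (f :: L₂) a
          simp only [lviewX]
          congr 1
          funext c
          by_cases hc : c ∈ vsF S f a
          · simp only [if_pos hc]
            congr 1
            have hcS : c ∈ S := (mem_vsF.1 hc).1
            have hcb : c ≠ b := fun hcb => hWn a ha (hcb ▸ (mem_vsF.1 hc).2)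
            exact hvs' c (Finset.mem_erase.2 ⟨hcb, hcS⟩)
          · simp [hc]
      have hinj : Function.Injective
          (fun L' : List (Fin (n + 1) → Fin (n + 1)) => f :: L') :=
        fun x y hxy => by simpa using hxy
      obtain ⟨ihA, ihB⟩ := ih L₂ hL₂
      constructor
      · intro hUS
        rw [hMeq, Finset.card_image_of_injective _ hinj]
        exact ihA (hUeq ▸ hUS)
      · intro hUS
        rw [hMeq, ihB (fun h => hUS (hUeq.trans h)), Finset.image_singleton]

lemma self_mem_Mset {S : Finset (Fin (n + 1))} {b m L} (hL : L ∈ Execs S m) :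
    L ∈ Mset S m b L := by
  classical
  exact Finset.mem_filter.2 ⟨hL, fun a _ => rfl⟩

lemma Mset_eq_of_mem {S : Finset (Fin (n + 1))} {b m L L'}
    (h : L' ∈ Mset S m b L) : Mset S m b L' = Mset S m b L := by
  classical
  simp only [Mset, mem_filter] at h ⊢
  ext L''
  simp only [mem_filter]
  constructor
  · rintro ⟨h1, h2⟩; exact ⟨h1, fun a ha => (h2 a ha).trans (h.2 a ha)⟩
  · rintro ⟨h1, h2⟩; exact ⟨h1, fun a ha => (h2 a ha).trans (h.2 a ha).symm⟩

/-! ### Lifting and restricting executions across a boundary face -/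

noncomputable def liftR (S : Finset (Fin (n + 1))) (t : Fin (n + 1))
    (f : Fin (n + 1) → Fin (n + 1)) : Fin (n + 1) → Fin (n + 1) :=
  normF S (fun c => if c = t then 2 * (n + 1) else (f c : ℕ))

noncomputable def liftL (S : Finset (Fin (n + 1))) (t : Fin (n + 1))
    (L : List (Fin (n + 1) → Fin (n + 1))) : List (Fin (n + 1) → Fin (n + 1)) :=
  L.map (liftR S t)

noncomputable def resR (T : Finset (Fin (n + 1)))
    (f : Fin (n + 1) → Fin (n + 1)) : Fin (n + 1) → Fin (n + 1) :=
  normF T (fun c => (f c : ℕ))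

noncomputable def resL (T : Finset (Fin (n + 1)))
    (L : List (Fin (n + 1) → Fin (n + 1))) : List (Fin (n + 1) → Fin (n + 1)) :=
  L.map (resR T)

lemma vsF_liftR {S : Finset (Fin (n + 1))} {t : Fin (n + 1)} {f a}
    (ha : a ∈ S.erase t) : vsF S (liftR S t f) a = vsF (S.erase t) f a := by
  have haS : a ∈ S := (Finset.mem_erase.1 ha).2
  have hat : a ≠ t := (Finset.mem_erase.1 ha).1
  rw [liftR, vsF_normF haS]
  ext c
  simp only [Finset.mem_filter, mem_vsF, Finset.mem_erase]
  constructor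
  · rintro ⟨hcS, hle⟩
    by_cases hct : c = t
    · subst hct
      rw [if_pos rfl, if_neg hat] at hle
      have := (f a).is_lt
      omega
    · rw [if_neg hct, if_neg hat] at hle
      exact ⟨⟨hct, hcS⟩, Fin.le_def.2 hle⟩
  · rintro ⟨⟨hct, hcS⟩, hle⟩
    refine ⟨hcS, ?_⟩
    rw [if_neg hct, if_neg hat]
    exact Fin.le_def.1 hle

lemma lift_mem {S : Finset (Fin (n + 1))} {t : Fin (n + 1)} {m L}
    (hL : L ∈ Execs (S.erase t) m) : liftL S t L ∈ Execs S m := by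
  refine mem_Execs.2 ⟨by simp [liftL, (mem_Execs.1 hL).1], ?_⟩
  intro g hg
  obtain ⟨f, _, rfl⟩ := List.mem_map.1 hg
  exact normF_mem

lemma lift_view {S : Finset (Fin (n + 1))} {t : Fin (n + 1)} (ht : t ∈ S) :
    ∀ {L a}, a ∈ S.erase t →
      lvw S (liftL S t L) a = lvw (S.erase t) L a := by
  intro L
  induction L with
  | nil => intro a _; rfl
  | cons f L ih =>
    intro a ha
    show lviewX id S (liftR S t f :: liftL S t L) a = lviewX id (S.erase t) (f :: L) a
    simp only [lviewX]
    congr 1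
    funext c
    rw [vsF_liftR ha]
    by_cases hc : c ∈ vsF (S.erase t) f a
    · simp only [if_pos hc]
      congr 1
      exact ih (vsF_subset hc)
    · simp [hc]

lemma lift_lcar {S : Finset (Fin (n + 1))} {t : Fin (n + 1)} (ht : t ∈ S) :
    ∀ {L a}, a ∈ S.erase t →
      lcar S (liftL S t L) a = lcar (S.erase t) L a := by
  intro L
  induction L with
  | nil => intro a _; rfl
  | cons f L ih =>
    intro a ha
    show (vsF S (liftR S t f) a).biUnion (lcar S (liftL S t L))
        = (vsF (S.erase t) f a).biUnion (lcar (S.erase t) L)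
    rw [vsF_liftR ha]
    exact Finset.biUnion_congr rfl (fun c hc => ih (vsF_subset hc))

lemma res_spec {S : Finset (Fin (n + 1))} {t : Fin (n + 1)} (ht : t ∈ S) :
    ∀ {m L}, L ∈ Execs S m → (∀ a ∈ S.erase t, t ∉ lcar S L a) →
      resL (S.erase t) L ∈ Execs (S.erase t) m ∧
      ∀ a ∈ S.erase t, lvw (S.erase t) (resL (S.erase t) L) a = lvw S L a := by
  intro m
  induction m with
  | zero =>
    intro L hL _
    have hL0 : L = [] := List.length_eq_zero_iff.1 (mem_Execs.1 hL).1
    subst hL0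
    exact ⟨by simp [resL, Execs], fun a _ => rfl⟩
  | succ m ih =>
    intro L hL hcar
    obtain ⟨f, L₂, rfl, hfR, hL₂⟩ := exec_cons hL
    have hvt : ∀ a ∈ S.erase t, t ∉ vsF S f a := by
      intro a ha hmem
      exact hcar a ha (by
        simp only [lcar]
        exact Finset.mem_biUnion.2 ⟨t, hmem, self_mem_lcar ht⟩)
    have hcar₂ : ∀ c ∈ S.erase t, t ∉ lcar S L₂ c := by
      intro c hc hmem
      exact hcar c hc (by
        simp only [lcar]
        exact Finset.mem_biUnion.2 ⟨c, self_mem_vsF (Finset.mem_erase.1 hc).2, hmem⟩)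
    obtain ⟨ihm, ihv⟩ := ih hL₂ hcar₂
    have hvs : ∀ a ∈ S.erase t, vsF (S.erase t) (resR (S.erase t) f) a = vsF S f a := by
      intro a ha
      rw [resR, vsF_normF ha]
      ext c
      simp only [Finset.mem_filter, mem_vsF, Finset.mem_erase]
      constructor
      · rintro ⟨⟨hct, hcS⟩, hle⟩
        exact ⟨hcS, Fin.le_def.2 hle⟩
      · rintro ⟨hcS, hle⟩
        have hct : c ≠ t := fun hct => hvt a ha (hct ▸ mem_vsF.2 ⟨hcS, hle⟩)
        exact ⟨⟨hct, hcS⟩, Fin.le_def.1 hle⟩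
    constructor
    · show resR (S.erase t) f :: resL (S.erase t) L₂ ∈ Execs (S.erase t) (m + 1)
      exact cons_mem_Execs normF_mem ihm
    · intro a ha
      show lviewX id (S.erase t) (resR (S.erase t) f :: resL (S.erase t) L₂) a
          = lviewX id S (f :: L₂) a
      simp only [lviewX]
      congr 1
      funext c
      rw [hvs a ha]
      by_cases hc : c ∈ vsF S f a
      · simp only [if_pos hc]
        congr 1
        have hcS : c ∈ S := (mem_vsF.1 hc).1
        have hct : c ≠ t := fun h => hvt a ha (h ▸ hc)
        exact ihv c (Finset.mem_erase.2 ⟨hct, hcS⟩)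
      · simp [hc]

/-! ### Parity tools -/

lemma invol_parity {α : Type*} [DecidableEq α] (V : Finset α) : ∀ (g : α → α),
    (∀ x ∈ V, g x ∈ V) → (∀ x ∈ V, g (g x) = x) →
    ((V.card : ZMod 2)) = (((V.filter (fun x => g x = x)).card : ZMod 2)) := by
  induction V using Finset.strongInduction with
  | _ V ih =>
    intro g h1 h2
    by_cases hfix : ∀ x ∈ V, g x = x
    · rw [Finset.filter_true_of_mem hfix]
    · push_neg at hfix
      obtain ⟨x₀, hx₀, hne⟩ := hfix
      have hgx₀ : g x₀ ∈ V := h1 x₀ hx₀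
      set V' := (V.erase x₀).erase (g x₀) with hV'
      have hss : V' ⊂ V :=
        Finset.ssubset_of_subset_of_ssubset (Finset.erase_subset _ _)
          (Finset.erase_ssubset hx₀)
      have hmap : ∀ y ∈ V', g y ∈ V' := by
        intro y hy
        rw [hV', Finset.mem_erase, Finset.mem_erase] at hy
        obtain ⟨hyne2, hyne1, hyV⟩ := hy
        refine Finset.mem_erase.2 ⟨?_, Finset.mem_erase.2 ⟨?_, h1 y hyV⟩⟩
        · intro h; apply hyne1; rw [← h2 y hyV, h, h2 x₀ hx₀]
        · intro h; apply hyne2; rw [← h2 y hyV, h]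
      have hinv : ∀ y ∈ V', g (g y) = y := by
        intro y hy
        rw [hV', Finset.mem_erase, Finset.mem_erase] at hy
        exact h2 y hy.2.2
      have hfil : V'.filter (fun x => g x = x) = V.filter (fun x => g x = x) := by
        ext y
        simp only [hV', Finset.mem_filter, Finset.mem_erase]
        constructor
        · rintro ⟨⟨_, _, h5⟩, h6⟩; exact ⟨h5, h6⟩
        · rintro ⟨h5, h6⟩
          refine ⟨⟨?_, ?_, h5⟩, h6⟩
          · intro h
            rw [h] at h6
            exact hne ((h2 x₀ hx₀).symm.trans h6).symm
          · intro h
            rw [h] at h6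
            exact hne h6
      have h2card : 2 ≤ V.card :=
        Finset.one_lt_card.2 ⟨x₀, hx₀, g x₀, hgx₀, fun h => hne h.symm⟩
      have hcard : V.card = V'.card + 2 := by
        rw [hV', Finset.card_erase_of_mem (Finset.mem_erase.2 ⟨hne, hgx₀⟩),
          Finset.card_erase_of_mem hx₀]
        omega
      rw [← hfil, hcard]
      calc ((V'.card + 2 : ℕ) : ZMod 2) = (V'.card : ZMod 2) + 2 := by push_cast; ring
        _ = (V'.card : ZMod 2) := by
              rw [show (2 : ZMod 2) = 0 from by decide, add_zero]
        _ = (((V'.filter (fun x => g x = x)).card : ZMod 2)) := ih V' hss g hmap hinv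

open scoped Classical in
lemma door_count (S : Finset (Fin (n + 1))) (t : Fin (n + 1)) (ht : t ∈ S)
    (g : Fin (n + 1) → Fin (n + 1)) (hg : ∀ a ∈ S, g a ∈ S) :
    (((S.filter (fun b => (S.erase b).image g = S.erase t)).card : ZMod 2))
      = if S.image g = S then 1 else 0 := by
  classical
  by_cases h : S.image g = S
  · rw [if_pos h]
    have hinj : Set.InjOn g ↑S := by
      apply Finset.injOn_of_card_image_eq
      rw [h]
    have himg : ∀ b ∈ S, (S.erase b).image g = (S.image g).erase (g b) := by
      intro b hb
      ext x
      simp only [Finset.mem_image, Finset.mem_erase]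
      constructor
      · rintro ⟨a, ⟨hab, haS⟩, rfl⟩
        exact ⟨fun hgx => hab (hinj haS hb hgx), a, haS, rfl⟩
      · rintro ⟨hx, a, haS, rfl⟩
        exact ⟨a, ⟨fun hab => hx (by rw [hab]), haS⟩, rfl⟩
    have hfil : S.filter (fun b => (S.erase b).image g = S.erase t)
        = S.filter (fun b => g b = t) := by
      apply Finset.filter_congr
      intro b hb
      rw [himg b hb, h]
      constructor
      · intro heq
        by_contra hne
        have htm : t ∈ S.erase (g b) := Finset.mem_erase.2 ⟨fun hh => hne hh.symm, ht⟩
        rw [heq] at htm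
        exact (Finset.mem_erase.1 htm).1 rfl
      · rintro rfl; rfl
    have ht' : t ∈ S.image g := by rw [h]; exact ht
    obtain ⟨b₀, hb₀S, hb₀⟩ := Finset.mem_image.1 ht'
    have hsingle : S.filter (fun b => g b = t) = {b₀} := by
      ext b
      simp only [Finset.mem_filter, Finset.mem_singleton]
      constructor
      · rintro ⟨hbS, hbt⟩
        exact hinj hbS hb₀S (by rw [hbt, hb₀])
      · rintro rfl; exact ⟨hb₀S, hb₀⟩
    rw [hfil, hsingle, Finset.card_singleton, Nat.cast_one]
  · rw [if_neg h]
    by_cases hex : ∃ b ∈ S, (S.erase b).image g = S.erase t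
    · obtain ⟨b₁, hb₁S, hb₁⟩ := hex
      have himgsub : S.image g ⊆ S := Finset.image_subset_iff.2 hg
      have himgT : S.image g = S.erase t := by
        apply Finset.Subset.antisymm
        · intro x hx
          obtain ⟨a, haS, rfl⟩ := Finset.mem_image.1 hx
          by_cases hab : a = b₁
          · subst hab
            by_contra hxe
            have hgat : g a = t := by
              by_contra hne
              exact hxe (Finset.mem_erase.2 ⟨hne, hg a haS⟩)
            apply h
            apply Finset.Subset.antisymm himgsub
            intro y hyS
            by_cases hyt : y = t
            · subst hyt; exact Finset.mem_image.2 ⟨a, haS, hgat⟩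
            · have hy' : y ∈ S.erase t := Finset.mem_erase.2 ⟨hyt, hyS⟩
              rw [← hb₁] at hy'
              obtain ⟨a', ha', rfl⟩ := Finset.mem_image.1 hy'
              exact Finset.mem_image.2 ⟨a', (Finset.mem_erase.1 ha').2, rfl⟩
          · rw [← hb₁]
            exact Finset.mem_image.2 ⟨a, Finset.mem_erase.2 ⟨hab, haS⟩, rfl⟩
        · rw [← hb₁]
          exact Finset.image_subset_image (Finset.erase_subset _ _)
      have hfib := Finset.card_eq_sum_card_fiberwise
        (f := g) (s := S) (t := S.erase t)
        (fun a ha => by rw [← himgT]; exact Finset.mem_image_of_mem _ ha)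
      have hfone : ∀ v ∈ S.erase t, 1 ≤ (S.filter (fun a => g a = v)).card := by
        intro v hv
        rw [← himgT] at hv
        obtain ⟨a, haS, rfl⟩ := Finset.mem_image.1 hv
        exact Finset.card_pos.2 ⟨a, Finset.mem_filter.2 ⟨haS, rfl⟩⟩
      have hTcard : S.card = (S.erase t).card + 1 := by
        rw [Finset.card_erase_of_mem ht]
        have := Finset.card_pos.2 ⟨t, ht⟩
        omega
      have hsum1 : ∑ v ∈ S.erase t, ((S.filter (fun a => g a = v)).card - 1) = 1 := by
        have hrw : ∑ v ∈ S.erase t, (S.filter (fun a => g a = v)).card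
            = ∑ v ∈ S.erase t, (((S.filter (fun a => g a = v)).card - 1) + 1) :=
          Finset.sum_congr rfl (fun v hv => by have := hfone v hv; omega)
        rw [hrw, Finset.sum_add_distrib, Finset.sum_const, smul_eq_mul, mul_one] at hfib
        omega
      obtain ⟨v₁, hv₁T, hv₁⟩ : ∃ v ∈ S.erase t, (S.filter (fun a => g a = v)).card - 1 ≠ 0 := by
        by_contra hall
        push_neg at hall
        rw [Finset.sum_eq_zero hall] at hsum1
        omega
      have hsplit := Finset.add_sum_erase (S.erase t)
        (fun v => (S.filter (fun a => g a = v)).card - 1) hv₁T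
      have hrest : ∑ v ∈ (S.erase t).erase v₁, ((S.filter (fun a => g a = v)).card - 1) = 0 := by
        omega
      have hv₁2 : (S.filter (fun a => g a = v₁)).card = 2 := by
        have := hfone v₁ hv₁T
        omega
      have hother : ∀ v ∈ S.erase t, v ≠ v₁ → (S.filter (fun a => g a = v)).card = 1 := by
        intro v hv hvne
        have hz := Finset.sum_eq_zero_iff.1 hrest v (Finset.mem_erase.2 ⟨hvne, hv⟩)
        have := hfone v hv
        omega
      have hfil : S.filter (fun b => (S.erase b).image g = S.erase t)
          = S.filter (fun b => g b = v₁) := by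
        apply Finset.filter_congr
        intro b hbS
        have hgbT : g b ∈ S.erase t := by rw [← himgT]; exact Finset.mem_image_of_mem _ hbS
        constructor
        · intro hcond
          by_contra hne
          have hcard1 := hother (g b) hgbT hne
          obtain ⟨x, hx⟩ := Finset.card_eq_one.1 hcard1
          have hbx : b = x := by
            have : b ∈ S.filter (fun a => g a = g b) := Finset.mem_filter.2 ⟨hbS, rfl⟩
            rw [hx] at this
            exact Finset.mem_singleton.1 this
          have hgbm : g b ∈ (S.erase b).image g := by rw [hcond]; exact hgbT
          obtain ⟨a, hae, hag⟩ := Finset.mem_image.1 hgbm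
          have ham : a ∈ S.filter (fun a => g a = g b) :=
            Finset.mem_filter.2 ⟨(Finset.mem_erase.1 hae).2, hag⟩
          rw [hx] at ham
          exact (Finset.mem_erase.1 hae).1 ((Finset.mem_singleton.1 ham).trans hbx.symm)
        · intro hgbv
          apply Finset.Subset.antisymm
          · intro x hx
            obtain ⟨a, hae, rfl⟩ := Finset.mem_image.1 hx
            rw [← himgT]
            exact Finset.mem_image_of_mem _ (Finset.mem_erase.1 hae).2
          · intro v hv
            by_cases hvv : v = v₁
            · subst hvv
              have h2' : 1 < (S.filter (fun a => g a = v)).card := by rw [hv₁2]; omega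
              obtain ⟨a, haf, a', ha'f, hne'⟩ := Finset.one_lt_card.1 h2'
              obtain ⟨haS, hav⟩ := Finset.mem_filter.1 haf
              obtain ⟨ha'S, ha'v⟩ := Finset.mem_filter.1 ha'f
              by_cases hab : a = b
              · subst hab
                refine Finset.mem_image.2 ⟨a', Finset.mem_erase.2 ⟨fun hh => hne' hh.symm, ha'S⟩, ha'v⟩
              · exact Finset.mem_image.2 ⟨a, Finset.mem_erase.2 ⟨hab, haS⟩, hav⟩
            · obtain ⟨a, haS, hav⟩ := by
                have hv' : v ∈ S.image g := by rw [himgT]; exact hv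
                exact Finset.mem_image.1 hv'
              have hab : a ≠ b := fun hh => hvv (by rw [← hav, hh, hgbv])
              exact Finset.mem_image.2 ⟨a, Finset.mem_erase.2 ⟨hab, haS⟩, hav⟩
      rw [hfil]
      have : S.filter (fun b => g b = v₁) = S.filter (fun a => g a = v₁) := rfl
      rw [this, hv₁2]
      decide
    · have hemp : S.filter (fun b => (S.erase b).image g = S.erase t) = ∅ :=
        Finset.filter_eq_empty_iff.2 (fun {b} hb hc => hex ⟨b, hb, hc⟩)
      rw [hemp, Finset.card_empty, Nat.cast_zero]

/-! ### The chromatic Sperner lemma -/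

open scoped Classical in
/-- The pivot involution on facets sharing a ridge. -/
noncomputable def flipE (S : Finset (Fin (n + 1))) (m : ℕ) (b : Fin (n + 1))
    (L : List (Fin (n + 1) → Fin (n + 1))) : List (Fin (n + 1) → Fin (n + 1)) :=
  if h : ∃ L' ∈ Mset S m b L, L' ≠ L then h.choose else L

lemma flipE_pos {S : Finset (Fin (n + 1))} {m b L}
    (hex : ∃ L' ∈ Mset S m b L, L' ≠ L) : flipE S m b L = hex.choose := dif_pos hex

lemma flipE_neg {S : Finset (Fin (n + 1))} {m b L}
    (hex : ¬ ∃ L' ∈ Mset S m b L, L' ≠ L) : flipE S m b L = L := dif_neg hex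

open scoped Classical in
theorem sperner : ∀ (N : ℕ) (S : Finset (Fin (n + 1))), S.card ≤ N → S.Nonempty →
    ∀ (m : ℕ) (c : Fin (n + 1) → View n → Fin (n + 1)),
    (∀ L ∈ Execs S m, ∀ a ∈ S, c a (lvw S L a) ∈ lcar S L a) →
    Odd (((Execs S m).filter
      (fun L => S.image (fun a => c a (lvw S L a)) = S)).card) := by
  classical
  intro N
  induction N with
  | zero =>
    intro S hcard hne
    exact absurd (Finset.card_pos.2 hne) (by omega)
  | succ N ihN =>
    intro S hcard hne m c hsp
    by_cases hone : S.card = 1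
    · -- base case : a single process
      obtain ⟨s, rfl⟩ := Finset.card_eq_one.1 hone
      have hfull : (Execs {s} m).filter
          (fun L => ({s} : Finset _).image (fun a => c a (lvw {s} L a)) = {s})
          = Execs {s} m := by
        apply Finset.filter_true_of_mem
        intro L hL
        have hd : c s (lvw {s} L s) ∈ lcar {s} L s :=
          hsp L hL s (Finset.mem_singleton_self s)
        have hds : c s (lvw {s} L s) = s :=
          Finset.mem_singleton.1 (lcar_subset (Finset.mem_singleton_self s) hd)
        rw [Finset.image_singleton, hds]
      rw [hfull]
      have hcard1 : ∀ m', (Execs ({s} : Finset (Fin (n + 1))) m').card = 1 := by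
        intro m'
        induction m' with
        | zero => simp [Execs]
        | succ m' ih =>
          have hR : Rnd ({s} : Finset (Fin (n + 1))) = {fun _ => 0} := by
            ext f
            rw [mem_Rnd, Finset.mem_singleton]
            constructor
            · intro hf
              funext c'
              by_cases hc : c' = s
              · subst hc
                by_contra h0
                have hpos : (0 : Fin (n + 1)) < f c' := Fin.pos_of_ne_zero h0
                obtain ⟨d, hd, hd0⟩ := hf.2 c' (Finset.mem_singleton_self c') 0 hpos
                rw [Finset.mem_singleton.1 hd] at hd0
                exact h0 hd0
              · exact hf.1 c' (by simp [hc])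
            · rintro rfl
              refine ⟨fun _ _ => rfl, ?_⟩
              intro a _ j hj
              exact absurd hj (by simp)
          have hinj : Function.Injective
              (fun p : (Fin (n + 1) → Fin (n + 1)) × List (Fin (n + 1) → Fin (n + 1)) =>
                p.1 :: p.2) := by
            rintro ⟨f1, L1⟩ ⟨f2, L2⟩ hpq
            simp only [List.cons.injEq] at hpq
            exact Prod.ext hpq.1 hpq.2
          show ((Rnd {s} ×ˢ Execs {s} m').image fun p => p.1 :: p.2).card = 1
          rw [Finset.card_image_of_injective _ hinj, Finset.card_product, hR,
            Finset.card_singleton, ih]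
      rw [hcard1 m]
      exact odd_one
    · -- inductive step
      have h2card : 2 ≤ S.card := by
        have := Finset.card_pos.2 hne
        omega
      obtain ⟨t, ht⟩ := hne
      have hTne : (S.erase t).Nonempty := by
        apply Finset.card_pos.1
        rw [Finset.card_erase_of_mem ht]
        omega
      have hTcard : (S.erase t).card ≤ N := by
        rw [Finset.card_erase_of_mem ht]
        omega
      have hspT : ∀ L ∈ Execs (S.erase t) m, ∀ a ∈ S.erase t,
          c a (lvw (S.erase t) L a) ∈ lcar (S.erase t) L a := by
        intro L hL a ha
        have h1 := hsp (liftL S t L) (lift_mem hL) a (Finset.mem_erase.1 ha).2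
        rw [lift_view ht ha, lift_lcar ht ha] at h1
        exact h1
      have ihT := ihN (S.erase t) hTcard hTne m c hspT
      have hone_of_odd : ∀ k : ℕ, Odd k → (k : ZMod 2) = 1 := by
        intro k hk
        rw [Nat.odd_iff] at hk
        rw [← ZMod.natCast_mod, hk, Nat.cast_one]
      have hcast_odd : ∀ k : ℕ, ((k : ZMod 2) = 1) → Odd k := by
        intro k hk
        rw [Nat.odd_iff]
        rcases Nat.mod_two_eq_zero_or_one k with h0 | h1
        · exfalso
          rw [← ZMod.natCast_mod, h0] at hk
          simp at hk
        · exact h1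
      apply hcast_odd
      -- Step 1 : per-facet door counting
      have hstep1 : ((((Execs S m).filter
            (fun L => S.image (fun a => c a (lvw S L a)) = S)).card : ZMod 2))
          = ∑ L ∈ Execs S m,
              (((S.filter (fun b => (S.erase b).image (fun a => c a (lvw S L a))
                = S.erase t)).card : ZMod 2)) := by
        rw [Finset.card_filter, Nat.cast_sum]
        apply Finset.sum_congr rfl
        intro L hL
        rw [door_count S t ht (fun a => c a (lvw S L a))
          (fun a ha => lcar_subset ha (hsp L hL a ha))]
        split <;> simp
      -- Step 2 : swap the summations
      have hstep2 : ∑ L ∈ Execs S m,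
            (((S.filter (fun b => (S.erase b).image (fun a => c a (lvw S L a))
              = S.erase t)).card : ZMod 2))
          = ∑ b ∈ S, ((((Execs S m).filter
              (fun L => (S.erase b).image (fun a => c a (lvw S L a))
                = S.erase t)).card : ZMod 2)) := by
        have lhs : ∀ L, ((S.filter (fun b => (S.erase b).image
              (fun a => c a (lvw S L a)) = S.erase t)).card : ZMod 2)
            = ∑ b ∈ S, (if (S.erase b).image (fun a => c a (lvw S L a)) = S.erase t
                then (1 : ZMod 2) else 0) := by
          intro L
          rw [Finset.card_filter, Nat.cast_sum]
          exact Finset.sum_congr rfl (fun b _ => by split <;> simp)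
        have rhs : ∀ b, (((Execs S m).filter (fun L => (S.erase b).image
              (fun a => c a (lvw S L a)) = S.erase t)).card : ZMod 2)
            = ∑ L ∈ Execs S m, (if (S.erase b).image (fun a => c a (lvw S L a))
                = S.erase t then (1 : ZMod 2) else 0) := by
          intro b
          rw [Finset.card_filter, Nat.cast_sum]
          exact Finset.sum_congr rfl (fun L _ => by split <;> simp)
        calc ∑ L ∈ Execs S m, (((S.filter (fun b => (S.erase b).image
              (fun a => c a (lvw S L a)) = S.erase t)).card : ZMod 2))
            = ∑ L ∈ Execs S m, ∑ b ∈ S,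
                (if (S.erase b).image (fun a => c a (lvw S L a)) = S.erase t
                  then (1 : ZMod 2) else 0) := Finset.sum_congr rfl (fun L _ => lhs L)
          _ = ∑ b ∈ S, ∑ L ∈ Execs S m,
                (if (S.erase b).image (fun a => c a (lvw S L a)) = S.erase t
                  then (1 : ZMod 2) else 0) := Finset.sum_comm
          _ = _ := Finset.sum_congr rfl (fun b _ => (rhs b).symm)
      -- Step 3 : involution reduces each summand to the boundary part
      have hFb : ∀ b, b ∈ S → ((((Execs S m).filter
            (fun L => (S.erase b).image (fun a => c a (lvw S L a))
              = S.erase t)).card : ZMod 2))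
          = ((((Execs S m).filter
            (fun L => ((S.erase b).image (fun a => c a (lvw S L a)) = S.erase t)
              ∧ Uset S b L ≠ S)).card : ZMod 2)) := by
        intro b hb
        have hι_mem : ∀ L ∈ Execs S m, flipE S m b L ∈ Mset S m b L := by
          intro L hL
          by_cases hex : ∃ L' ∈ Mset S m b L, L' ≠ L
          · rw [flipE_pos hex]; exact hex.choose_spec.1
          · rw [flipE_neg hex]; exact self_mem_Mset hL
        have hMset_exec : ∀ {L L'}, L' ∈ Mset S m b L → L' ∈ Execs S m :=
          fun h => (Finset.mem_filter.1 h).1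
        have hMset_view : ∀ {L L'}, L' ∈ Mset S m b L →
            ∀ a ∈ S.erase b, lvw S L' a = lvw S L a :=
          fun h => (Finset.mem_filter.1 h).2
        have hfix_iff : ∀ L ∈ Execs S m, (flipE S m b L = L ↔ Uset S b L ≠ S) := by
          intro L hL
          obtain ⟨hA, hB⟩ := Mset_spec hb m L hL
          constructor
          · intro hfix hUS
            have hc2 := hA hUS
            obtain ⟨x, hx, y, hy, hxy⟩ := Finset.one_lt_card.1
              (by omega : 1 < (Mset S m b L).card)
            have hex : ∃ L' ∈ Mset S m b L, L' ≠ L := by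
              by_cases hxL : x = L
              · exact ⟨y, hy, fun hyL => hxy (hxL.trans hyL.symm)⟩
              · exact ⟨x, hx, hxL⟩
            rw [flipE_pos hex] at hfix
            exact hex.choose_spec.2 hfix
          · intro hUS
            have hsing := hB hUS
            by_cases hex : ∃ L' ∈ Mset S m b L, L' ≠ L
            · exfalso
              obtain ⟨hmem, hne⟩ := hex.choose_spec
              exact hne (Finset.mem_singleton.1 (by rw [← hsing]; exact hmem))
            · rw [flipE_neg hex]
        have hι_fb : ∀ L ∈ (Execs S m).filter
            (fun L => (S.erase b).image (fun a => c a (lvw S L a)) = S.erase t),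
            flipE S m b L ∈ (Execs S m).filter
              (fun L => (S.erase b).image (fun a => c a (lvw S L a)) = S.erase t) := by
          intro L hL
          obtain ⟨hLe, hLc⟩ := Finset.mem_filter.1 hL
          have h1 := hι_mem L hLe
          refine Finset.mem_filter.2 ⟨hMset_exec h1, ?_⟩
          rw [← hLc]
          exact Finset.image_congr (fun a ha => by rw [hMset_view h1 a ha])
        have hι_inv : ∀ L ∈ Execs S m, flipE S m b (flipE S m b L) = L := by
          intro L hL
          by_cases hUS : Uset S b L = S
          · obtain ⟨hA, hB⟩ := Mset_spec hb m L hL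
            have hc2 := hA hUS
            have h1 := hι_mem L hL
            have hιe : flipE S m b L ∈ Execs S m := hMset_exec h1
            have hne : flipE S m b L ≠ L := by
              intro hfix
              exact ((hfix_iff L hL).1 hfix) hUS
            have hMeq : Mset S m b (flipE S m b L) = Mset S m b L := Mset_eq_of_mem h1
            have hpair : Mset S m b L = {L, flipE S m b L} := by
              apply (Finset.eq_of_subset_of_card_le ?_ ?_).symm
              · intro x hx
                rcases Finset.mem_insert.1 hx with rfl | hx2
                · exact self_mem_Mset hL
                · rw [Finset.mem_singleton.1 hx2]; exact h1
              · rw [hc2, Finset.card_pair (fun h => hne h.symm)]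
            have hUS2 : Uset S b (flipE S m b L) = S := by
              by_contra hUS2
              have hsing := (Mset_spec hb m (flipE S m b L) hιe).2 hUS2
              rw [hMeq] at hsing
              have hLmem : L ∈ Mset S m b L := self_mem_Mset hL
              rw [hsing] at hLmem
              exact hne (Finset.mem_singleton.1 hLmem).symm
            have hne2 : flipE S m b (flipE S m b L) ≠ flipE S m b L :=
              fun hfix => ((hfix_iff (flipE S m b L) hιe).1 hfix) hUS2
            have h3 : flipE S m b (flipE S m b L) ∈ ({L, flipE S m b L} : Finset _) := by
              rw [← hpair, ← hMeq]
              exact hι_mem (flipE S m b L) hιe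
            rcases Finset.mem_insert.1 h3 with h4 | h4
            · exact h4
            · exact absurd (Finset.mem_singleton.1 h4) hne2
          · have hfx := (hfix_iff L hL).2 hUS
            rw [hfx, hfx]
        have hff : (((Execs S m).filter (fun L => (S.erase b).image
              (fun a => c a (lvw S L a)) = S.erase t)).filter
              (fun L => flipE S m b L = L))
            = (Execs S m).filter
              (fun L => ((S.erase b).image (fun a => c a (lvw S L a)) = S.erase t)
                ∧ Uset S b L ≠ S) := by
          rw [Finset.filter_filter]
          exact Finset.filter_congr
            (fun L hL => and_congr_right (fun _ => hfix_iff L hL))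
        rw [← hff]
        exact invol_parity _ (flipE S m b) hι_fb
          (fun x hx => hι_inv x (Finset.mem_filter.1 hx).1)
      -- Step 4 : off-boundary colours contribute nothing
      have hstep3 : ∀ b ∈ S, b ≠ t → ((((Execs S m).filter
            (fun L => ((S.erase b).image (fun a => c a (lvw S L a)) = S.erase t)
              ∧ Uset S b L ≠ S)).card : ZMod 2)) = 0 := by
        intro b hb hbt
        have hemp : (Execs S m).filter
            (fun L => ((S.erase b).image (fun a => c a (lvw S L a)) = S.erase t)
              ∧ Uset S b L ≠ S) = ∅ := by
          apply Finset.filter_eq_empty_iff.2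
          rintro L hL ⟨hcond, hUS⟩
          apply hUS
          have hbT : b ∈ S.erase t := Finset.mem_erase.2 ⟨hbt, hb⟩
          rw [← hcond] at hbT
          obtain ⟨a, hae, hab⟩ := Finset.mem_image.1 hbT
          have hbU : b ∈ Uset S b L := by
            refine Finset.mem_biUnion.2 ⟨a, hae, ?_⟩
            rw [← hab]
            exact hsp L hL a (Finset.mem_erase.1 hae).2
          apply Finset.Subset.antisymm
          · exact Finset.biUnion_subset.2
              (fun a' ha' => lcar_subset (Finset.mem_erase.1 ha').2)
          · intro x hx
            by_cases hxb : x = b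
            · subst hxb; exact hbU
            · exact Finset.mem_biUnion.2
                ⟨x, Finset.mem_erase.2 ⟨hxb, hx⟩, self_mem_lcar hx⟩
        rw [hemp, Finset.card_empty, Nat.cast_zero]
      -- Step 5 : the boundary term for b = t is the panchromatic count over T
      have hstep4 : ((((Execs S m).filter
            (fun L => ((S.erase t).image (fun a => c a (lvw S L a)) = S.erase t)
              ∧ Uset S t L ≠ S)).card : ZMod 2))
          = ((((Execs (S.erase t) m).filter
            (fun L => (S.erase t).image (fun a => c a (lvw (S.erase t) L a))
              = S.erase t)).card : ZMod 2)) := by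
        congr 1
        -- auxiliary fact for elements of the fixed set
        have hnotin : ∀ L ∈ Execs S m, Uset S t L ≠ S →
            ∀ a ∈ S.erase t, t ∉ lcar S L a := by
          intro L hL hUS a ha hmem
          apply hUS
          have htU : t ∈ Uset S t L := Finset.mem_biUnion.2 ⟨a, ha, hmem⟩
          apply Finset.Subset.antisymm
          · exact Finset.biUnion_subset.2
              (fun a' ha' => lcar_subset (Finset.mem_erase.1 ha').2)
          · intro x hx
            by_cases hxt : x = t
            · subst hxt; exact htU
            · exact Finset.mem_biUnion.2
                ⟨x, Finset.mem_erase.2 ⟨hxt, hx⟩, self_mem_lcar hx⟩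
        have hliftnot : ∀ L₀, ∀ a ∈ S.erase t, t ∉ lcar S (liftL S t L₀) a := by
          intro L₀ a ha hmem
          rw [lift_lcar ht ha] at hmem
          have := lcar_subset ha hmem
          exact (Finset.mem_erase.1 this).1 rfl
        refine Finset.card_bij' (fun L _ => resL (S.erase t) L)
          (fun L₀ _ => liftL S t L₀) ?_ ?_ ?_ ?_
        · -- forward membership
          intro L hL
          obtain ⟨hLe, hcond, hUS⟩ :
              L ∈ Execs S m ∧ ((S.erase t).image (fun a => c a (lvw S L a)) = S.erase t)
                ∧ Uset S t L ≠ S := by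
            have h1 := Finset.mem_filter.1 hL
            exact ⟨h1.1, h1.2.1, h1.2.2⟩
          obtain ⟨hres_mem, hres_view⟩ := res_spec ht hLe (hnotin L hLe hUS)
          refine Finset.mem_filter.2 ⟨hres_mem, ?_⟩
          show (S.erase t).image
              (fun a => c a (lvw (S.erase t) (resL (S.erase t) L) a)) = S.erase t
          have h5 : (S.erase t).image
              (fun a => c a (lvw (S.erase t) (resL (S.erase t) L) a))
              = (S.erase t).image (fun a => c a (lvw S L a)) :=
            Finset.image_congr (fun a ha => by rw [hres_view a ha])
          rw [h5]
          exact hcond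
        · -- backward membership
          intro L₀ hL₀
          obtain ⟨hL₀e, hL₀c⟩ := Finset.mem_filter.1 hL₀
          refine Finset.mem_filter.2 ⟨lift_mem hL₀e, ?_, ?_⟩
          · show (S.erase t).image
                (fun a => c a (lvw S (liftL S t L₀) a)) = S.erase t
            have h5 : (S.erase t).image
                (fun a => c a (lvw S (liftL S t L₀) a))
                = (S.erase t).image (fun a => c a (lvw (S.erase t) L₀ a)) :=
              Finset.image_congr (fun a ha => by rw [lift_view ht ha])
            rw [h5]
            exact hL₀c
          · intro hUS
            have htm : t ∈ Uset S t (liftL S t L₀) := by rw [hUS]; exact ht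
            obtain ⟨a, ha, hmem⟩ := Finset.mem_biUnion.1 htm
            exact hliftnot L₀ a ha hmem
        · -- left inverse
          intro L hL
          obtain ⟨hLe, hcond, hUS⟩ :
              L ∈ Execs S m ∧ ((S.erase t).image (fun a => c a (lvw S L a)) = S.erase t)
                ∧ Uset S t L ≠ S := by
            have h1 := Finset.mem_filter.1 hL
            exact ⟨h1.1, h1.2.1, h1.2.2⟩
          obtain ⟨hres_mem, hres_view⟩ := res_spec ht hLe (hnotin L hLe hUS)
          have hmem : liftL S t (resL (S.erase t) L) ∈ Mset S m t L := by
            refine Finset.mem_filter.2 ⟨lift_mem hres_mem, ?_⟩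
            intro a ha
            rw [lift_view ht ha, hres_view a ha]
          rw [(Mset_spec ht m L hLe).2 hUS] at hmem
          exact Finset.mem_singleton.1 hmem
        · -- right inverse
          intro L₀ hL₀
          obtain ⟨hL₀e, hL₀c⟩ := Finset.mem_filter.1 hL₀
          obtain ⟨hres_mem, hres_view⟩ :=
            res_spec ht (lift_mem hL₀e) (hliftnot L₀)
          refine lvw_inj hres_mem hL₀e ?_
          intro a ha
          rw [hres_view a ha, lift_view ht ha]
      -- Combine everything
      rw [hstep1, hstep2]
      rw [Finset.sum_eq_single_of_mem t ht
        (fun b hb hbt => by rw [hFb b hb, hstep3 b hb hbt])]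
      rw [hFb t ht, hstep4]
      exact hone_of_odd _ ihT


/-! ### Translation to ordered set partitions and `iisView` -/

noncomputable def fiber (f : Fin (n + 1) → Fin (n + 1)) (j : ℕ) : Finset (Fin (n + 1)) :=
  Finset.univ.filter (fun c => (f c : ℕ) = j)

open scoped Classical in
/-- The ordered set partition encoded by a part-index function. -/
noncomputable def toOSP (f : Fin (n + 1) → Fin (n + 1)) : OSP n where
  parts := ((List.range (n + 1)).filter (fun j => decide (fiber f j).Nonempty)).map (fiber f)
  nonempty := by
    intro A hA
    obtain ⟨j, hj, rfl⟩ := List.mem_map.1 hA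
    exact of_decide_eq_true (List.mem_filter.1 hj).2
  pairwise_disjoint := by
    rw [List.pairwise_map]
    have h1 : ((List.range (n + 1)).filter
        (fun j => decide (fiber f j).Nonempty)).Pairwise (· < ·) := by
      apply List.Pairwise.sublist List.filter_sublist
      exact List.pairwise_lt_range
    apply h1.imp
    intro j k hjk
    rw [Finset.disjoint_left]
    intro c hc1 hc2
    simp only [fiber, Finset.mem_filter] at hc1 hc2
    omega
  cover := by
    intro a
    refine ⟨fiber f (f a : ℕ), ?_, ?_⟩
    · apply List.mem_map.2
      refine ⟨(f a : ℕ), ?_, rfl⟩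
      apply List.mem_filter.2
      refine ⟨List.mem_range.2 (f a).is_lt, decide_eq_true ⟨a, ?_⟩⟩
      simp [fiber]
    · simp [fiber]

lemma mem_foldr_union {l : List (Finset (Fin (n + 1)))} {x : Fin (n + 1)} :
    x ∈ l.foldr (· ∪ ·) ∅ ↔ ∃ A ∈ l, x ∈ A := by
  induction l with
  | nil => simp
  | cons A l ih =>
    simp only [List.foldr_cons, Finset.mem_union, ih, List.mem_cons]
    constructor
    · rintro (h | ⟨B, hB, hx⟩)
      · exact ⟨A, Or.inl rfl, h⟩
      · exact ⟨B, Or.inr hB, hx⟩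
    · rintro ⟨B, (rfl | hB), hx⟩
      · exact Or.inl hx
      · exact Or.inr ⟨B, hB, hx⟩

lemma findIdx_map {α β : Type*} (g : α → β) (l : List α) (p : β → Bool) :
    (l.map g).findIdx p = l.findIdx (p ∘ g) := by
  induction l with
  | nil => rfl
  | cons a l ih => simp [List.findIdx_cons, ih]

lemma take_findIdx_sorted : ∀ {l : List ℕ}, l.Pairwise (· < ·) → ∀ {v : ℕ}, v ∈ l →
    l.take (l.findIdx (fun j => j = v) + 1) = l.filter (fun j => j ≤ v) := by
  intro l
  induction l with
  | nil => intro _ v hv; cases hv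
  | cons j l ih =>
    intro hl v hv
    rcases List.mem_cons.1 hv with rfl | hv'
    · rw [List.findIdx_cons]
      have hjl : ∀ k ∈ l, v < k := fun k hk => (List.pairwise_cons.1 hl).1 k hk
      have hfil : l.filter (fun k => k ≤ v) = [] := by
        rw [List.filter_eq_nil_iff]
        intro k hk
        have := hjl k hk
        simp only [decide_eq_true_eq]
        omega
      simp [hfil]
    · have hjv : j < v := (List.pairwise_cons.1 hl).1 v hv'
      rw [List.findIdx_cons]
      have hne : (decide (j = v)) = false := by
        simp only [decide_eq_false_iff_not]
        omega
      rw [hne]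
      simp only [cond_false]
      rw [List.take_succ_cons, List.filter_cons]
      have hle : (decide (j ≤ v)) = true := by
        simp only [decide_eq_true_eq]
        omega
      rw [hle]
      simp only [if_true]
      rw [ih (List.pairwise_cons.1 hl).2 hv']

lemma toOSP_viewSet (f : Fin (n + 1) → Fin (n + 1)) (a : Fin (n + 1)) :
    (toOSP f).viewSet a = vsF Finset.univ f a := by
  classical
  have hsorted : ((List.range (n + 1)).filter
      (fun j => decide (fiber f j).Nonempty)).Pairwise (· < ·) := by
    apply List.Pairwise.sublist List.filter_sublist
    exact List.pairwise_lt_range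
  have hmemraw : ∀ x : Fin (n + 1), (f x : ℕ) ∈ (List.range (n + 1)).filter
      (fun j => decide (fiber f j).Nonempty) := by
    intro x
    apply List.mem_filter.2
    refine ⟨List.mem_range.2 (f x).is_lt, decide_eq_true ⟨x, ?_⟩⟩
    simp [fiber]
  have hcomp : ((fun A => decide (a ∈ A)) ∘ (fiber f)) = (fun j => decide (j = (f a : ℕ))) := by
    funext j
    simp only [Function.comp]
    rw [decide_eq_decide]
    simp only [fiber, Finset.mem_filter, Finset.mem_univ, true_and]
    exact eq_comm
  rw [OSP.viewSet]
  show (((((List.range (n + 1)).filter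
      (fun j => decide (fiber f j).Nonempty)).map (fiber f)).take
        ((((List.range (n + 1)).filter
          (fun j => decide (fiber f j).Nonempty)).map (fiber f)).findIdx
            (fun A => decide (a ∈ A)) + 1)).foldr (· ∪ ·) ∅) = _
  rw [findIdx_map, hcomp, ← List.map_take, take_findIdx_sorted hsorted (hmemraw a)]
  ext x
  rw [mem_foldr_union, mem_vsF]
  constructor
  · rintro ⟨A, hA, hx⟩
    obtain ⟨j, hj, rfl⟩ := List.mem_map.1 hA
    have hj2 := (List.mem_filter.1 hj).2
    simp only [decide_eq_true_eq] at hj2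
    simp only [fiber, Finset.mem_filter, Finset.mem_univ, true_and] at hx
    refine ⟨Finset.mem_univ x, Fin.le_def.2 ?_⟩
    omega
  · rintro ⟨-, hle⟩
    refine ⟨fiber f (f x : ℕ), ?_, ?_⟩
    · apply List.mem_map.2
      refine ⟨(f x : ℕ), ?_, rfl⟩
      apply List.mem_filter.2
      refine ⟨hmemraw x, ?_⟩
      simp only [decide_eq_true_eq]
      exact Fin.le_def.1 hle
    · simp [fiber]

lemma iisView_congr {X : Fin (n + 1) → Fin (n + 1)} :
    ∀ (m : ℕ) (γ γ' : Fin m → OSP n), (∀ i a, (γ i).viewSet a = (γ' i).viewSet a) →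
      ∀ a, iisView X m γ a = iisView X m γ' a := by
  intro m
  induction m with
  | zero => intro γ γ' h a; rfl
  | succ m ih =>
    intro γ γ' h a
    simp only [iisView]
    congr 1
    funext b
    rw [h (Fin.last m) a]
    by_cases hb : b ∈ (γ' (Fin.last m)).viewSet a
    · simp only [if_pos hb]
      congr 1
      exact ih _ _ (fun i a' => h i.castSucc a') b
    · simp [hb]

lemma get_index_eq {α : Type*} (L : List α) (i j : ℕ) (h : i = j) (hi : i < L.length) :
    L.get ⟨i, hi⟩ = L.get ⟨j, h ▸ hi⟩ := by subst h; rfl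

/-- The round sequence (in `iisView` indexing) of an execution list. -/
noncomputable def toGam (L : List (Fin (n + 1) → Fin (n + 1))) : Fin L.length → OSP n :=
  fun i => toOSP (L.get ⟨L.length - 1 - (i : ℕ), by have := i.isLt; omega⟩)

lemma toGam_view {X : Fin (n + 1) → Fin (n + 1)} :
    ∀ (L : List (Fin (n + 1) → Fin (n + 1))) (a : Fin (n + 1)),
      iisView X L.length (toGam L) a = lviewX X Finset.univ L a := by
  intro L
  induction L with
  | nil => intro a; rfl
  | cons f L ih =>
    intro a
    have hlast : toGam (f :: L) (Fin.last L.length) = toOSP f := by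
      simp only [toGam]
      congr 1
      have h0 : (f :: L).length - 1 - ((Fin.last L.length) : ℕ) = 0 := by
        simp
      rw [get_index_eq _ _ _ h0]
      rfl
    have hcast : ∀ i : Fin L.length, toGam (f :: L) i.castSucc = toGam L i := by
      intro i
      simp only [toGam]
      congr 1
      have hidx : (f :: L).length - 1 - ((i.castSucc : Fin (L.length + 1)) : ℕ)
          = (L.length - 1 - (i : ℕ)) + 1 := by
        have := i.isLt
        simp [Fin.coe_castSucc]
        omega
      rw [get_index_eq _ _ _ hidx]
      rfl
    show iisView X (L.length + 1) (toGam (f :: L)) a = _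
    simp only [iisView, lviewX]
    congr 1
    funext b
    rw [hlast, toOSP_viewSet]
    by_cases hb : b ∈ vsF Finset.univ f a
    · simp only [if_pos hb]
      congr 1
      calc iisView X L.length (fun i => toGam (f :: L) i.castSucc) b
          = iisView X L.length (toGam L) b :=
            iisView_congr _ _ _ (fun i a' => by rw [hcast i]) b
        _ = _ := ih b
    · simp [hb]

end KSA
/-- **Decision-function formulation of Theorem 3.** For
`n ≥ 1`, `1 ≤ k ≤ n`, `m ≥ 1`, there is no function `δ` assigning to each
vertex `(a, w)` of the `m`-iterated standard chromatic subdivision of the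
input complex a decision value such that on every facet `X·γ₁·…·γ_m`
validity and `k`-agreement hold. -/
theorem no_decision_map (n k m : ℕ) (hn : 1 ≤ n) (hk1 : 1 ≤ k) (hkn : k ≤ n)
    (hm : 1 ≤ m) :
    ¬ ∃ δ : Fin (n + 1) × View n → Fin (n + 1),
        ∀ (X : Fin (n + 1) → Fin (n + 1)) (γ : Fin m → OSP n),
          (∀ a, ∃ b, δ (a, iisView X m γ a) = X b) ∧
          (Finset.univ.image (fun a => δ (a, iisView X m γ a))).card ≤ k := by
  classical
  rintro ⟨δ, hδ⟩
  -- the induced Sperner colouring satisfies the carrier condition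
  have hsp : ∀ L ∈ KSA.Execs (Finset.univ : Finset (Fin (n + 1))) m,
      ∀ a ∈ (Finset.univ : Finset (Fin (n + 1))),
        δ (a, KSA.lvw Finset.univ L a) ∈ KSA.lcar Finset.univ L a := by
    intro L hL a _
    by_contra hout
    have hlen : L.length = m := (KSA.mem_Execs.1 hL).1
    subst hlen
    have key : ∀ u : Fin (n + 1), δ (a, KSA.lvw Finset.univ L a) = u := by
      intro u
      obtain ⟨b, hb⟩ := (hδ (fun d => if d ∈ KSA.lcar Finset.univ L a then d else u)
        (KSA.toGam L)).1 a
      rw [KSA.toGam_view] at hb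
      have hXid : KSA.lviewX (fun d => if d ∈ KSA.lcar Finset.univ L a then d else u)
          Finset.univ L a = KSA.lvw Finset.univ L a := by
        apply KSA.lviewX_congr
        intro d hd
        simp [hd]
      rw [hXid] at hb
      rw [hb]
      by_cases hbc : b ∈ KSA.lcar Finset.univ L a
      · exfalso
        apply hout
        rw [hb, if_pos hbc]
        exact hbc
      · rw [if_neg hbc]
    have h01 := (key 0).symm.trans (key 1)
    have hval : (0 : Fin (n + 1)).val = (1 : Fin (n + 1)).val := by rw [h01]
    rw [Fin.val_zero, Fin.val_one'] at hval
    have : 1 % (n + 1) = 1 := Nat.mod_eq_of_lt (by omega)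
    omega
  have hodd := KSA.sperner (n + 1) Finset.univ
    (by rw [Finset.card_univ, Fintype.card_fin]) ⟨0, Finset.mem_univ 0⟩ m
    (fun a w => δ (a, w)) (fun L hL a ha => hsp L hL a ha)
  obtain ⟨L, hLmem⟩ := Finset.card_pos.1 hodd.pos
  obtain ⟨hLe, hLpan⟩ := Finset.mem_filter.1 hLmem
  have hlen : L.length = m := (KSA.mem_Execs.1 hLe).1
  subst hlen
  have hagree := (hδ id (KSA.toGam L)).2
  have himg : Finset.univ.image
      (fun a => δ (a, iisView id L.length (KSA.toGam L) a))
      = Finset.univ.image (fun a => δ (a, KSA.lvw Finset.univ L a)) :=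
    Finset.image_congr (fun a _ => by rw [KSA.toGam_view]; rfl)
  rw [himg, hLpan, Finset.card_univ, Fintype.card_fin] at hagree
  omega
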